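/- arXiv:gr-qc/0012046 — 9 statements merged into one kernel-verified Lean document; each statement's English description precedes it below -/
import Mathlib

section
/- If a complex antisymmetric rank-2 tensor L on Minkowski space is an eigenvector of the Hodge star, i.e. *L = λL for some λ ∈ ℂ, then the real antisymmetric tensors Re L and Im L commute: [Re L, Im L] = 0. -/
noncomputable section
open Complex Finset

/-- The Minkowski metric `diag(+1,-1,-1,-1)` on `ℝ⁴`. -/
def gR (μ ν : Fin 4) : ℝ := if μ = ν then (if μ = (0 : Fin 4) then 1 else -1) else 0

/-- The value of an index as a real number. -/
def fv (a : Fin 4) : ℝ := (a : ℕ)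

/-- The totally antisymmetric symbol `ε` with `ε₀₁₂₃ = +1`. -/
def eps (a b c d : Fin 4) : ℝ :=
  ((fv b - fv a) * (fv c - fv a) * (fv d - fv a) *
    (fv c - fv b) * (fv d - fv b) * (fv d - fv c)) / 12

/-- The Hodge star of an antisymmetric rank-2 (lower-index) tensor:
`(*L)_{μν} = (1/2) L^{κλ} ε_{κλμν}`, indices raised with the Minkowski metric. -/
def hodge (L : Fin 4 → Fin 4 → ℂ) (μ ν : Fin 4) : ℂ :=
  (1/2) * ∑ κ : Fin 4, ∑ l : Fin 4, ((gR κ κ * gR l l * eps κ l μ ν : ℝ) : ℂ) * L κ l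

/-- The commutator `[L,N]` of rank-2 tensors, with the contracted index raised by the
Minkowski metric, and the free raised index lowered again:
`[L,N]_{τλ} = L_{τκ} g^{κκ} N_{κλ} − N_{τκ} g^{κκ} L_{κλ}`. -/
def commT (L N : Fin 4 → Fin 4 → ℂ) (τ lam : Fin 4) : ℂ :=
  ∑ κ : Fin 4, ((gR κ κ : ℝ) : ℂ) * (L τ κ * N κ lam - N τ κ * L κ lam)

/-! On 2-forms in Minkowski space `** = -1`, so a nonzero eigenvector of `*` has eigenvalue
`λ = ±i`. Since `*` has real coefficients it commutes with complex conjugation, which gives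
`*(Re L) = λ i · Im L` with `λ i = ∓1`. The claim then reduces to `[F, *F] = 0` for real
antisymmetric `F`, an identity checked on components. -/

def bivector (a b c d e f : ℂ) : Fin 4 → Fin 4 → ℂ :=
  ![![0, a, b, c], ![-a, 0, d, e], ![-b, -d, 0, f], ![-c, -e, -f, 0]]

lemma exists_eq_bivector {F : Fin 4 → Fin 4 → ℂ} (hF : ∀ μ ν, F μ ν = -F ν μ) :
    ∃ a b c d e f, F = bivector a b c d e f := by
  refine ⟨F 0 1, F 0 2, F 0 3, F 1 2, F 1 3, F 2 3, ?_⟩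
  have hdiag : ∀ μ, F μ μ = 0 := fun μ => self_eq_neg.mp (hF μ μ)
  funext μ ν
  fin_cases μ <;> fin_cases ν <;>
    simp [bivector, hdiag, hF 1 0, hF 2 0, hF 3 0, hF 2 1, hF 3 1, hF 3 2]

lemma hodge_bivector (a b c d e f : ℂ) :
    hodge (bivector a b c d e f) = bivector f (-e) d (-c) b (-a) := by
  funext μ ν
  fin_cases μ <;> fin_cases ν <;> simp [hodge, bivector, Fin.sum_univ_four, eps, fv, gR] <;> ring

lemma hodge_hodge {F : Fin 4 → Fin 4 → ℂ} (hF : ∀ μ ν, F μ ν = -F ν μ) :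
    hodge (hodge F) = -F := by
  obtain ⟨a, b, c, d, e, f, rfl⟩ := exists_eq_bivector hF
  rw [hodge_bivector, hodge_bivector]
  funext μ ν
  fin_cases μ <;> fin_cases ν <;> simp [bivector]

lemma commT_hodge_self {F : Fin 4 → Fin 4 → ℂ} (hF : ∀ μ ν, F μ ν = -F ν μ) :
    commT F (hodge F) = 0 := by
  obtain ⟨a, b, c, d, e, f, rfl⟩ := exists_eq_bivector hF
  rw [hodge_bivector]
  funext μ ν
  fin_cases μ <;> fin_cases ν <;> simp [commT, bivector, Fin.sum_univ_four, gR] <;> ring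

lemma hodge_add (F G : Fin 4 → Fin 4 → ℂ) : hodge (F + G) = hodge F + hodge G := by
  funext μ ν
  simp only [hodge, Pi.add_apply, mul_add, Finset.sum_add_distrib]

lemma hodge_smul (c : ℂ) (F : Fin 4 → Fin 4 → ℂ) : hodge (c • F) = c • hodge F := by
  funext μ ν
  simp only [hodge, Pi.smul_apply, smul_eq_mul, Finset.mul_sum]
  exact Finset.sum_congr rfl fun κ _ => Finset.sum_congr rfl fun l _ => by ring

lemma hodge_star (F : Fin 4 → Fin 4 → ℂ) : hodge (star F) = star (hodge F) := by
  funext μ ν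
  simp [hodge]

lemma commT_smul_right (F G : Fin 4 → Fin 4 → ℂ) (c : ℂ) :
    commT F (c • G) = c • commT F G := by
  funext μ ν
  simp only [commT, Pi.smul_apply, smul_eq_mul, Finset.mul_sum]
  exact Finset.sum_congr rfl fun κ _ => by ring

lemma sq_eq_neg_one_of_hodge_eq_smul {F : Fin 4 → Fin 4 → ℂ}
    (hF : ∀ μ ν, F μ ν = -F ν μ) (hF0 : F ≠ 0) {c : ℂ} (h : hodge F = c • F) : c ^ 2 = -1 := by
  have : (c ^ 2 + 1) • F = 0 := by
    rw [add_smul, one_smul, sq, mul_smul, ← h, ← hodge_smul, ← h, hodge_hodge hF,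
      neg_add_cancel]
  exact eq_neg_of_add_eq_zero_left ((smul_eq_zero.mp this).resolve_right hF0)

lemma star_eq_neg_of_sq_eq_neg_one {c : ℂ} (hc : c ^ 2 = -1) : star c = -c := by
  rcases sq_eq_sq_iff_eq_or_eq_neg.mp (hc.trans I_sq.symm) with rfl | rfl <;> simp

lemma hodge_re_eq_smul_im {L : Fin 4 → Fin 4 → ℂ} {c : ℂ} (h : hodge L = c • L)
    (hc : c ^ 2 = -1) :
    hodge (fun μ ν => ((L μ ν).re : ℂ)) = (c * I) • fun μ ν => ((L μ ν).im : ℂ) := by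
  have hre : (fun μ ν => ((L μ ν).re : ℂ)) = (2⁻¹ : ℂ) • L + (2⁻¹ : ℂ) • star L := by
    funext μ ν
    simp only [re_eq_add_conj, Pi.add_apply, Pi.smul_apply, Pi.star_apply, smul_eq_mul,
      star_def]
    ring
  have him : (fun μ ν => ((L μ ν).im : ℂ)) = (2 * I)⁻¹ • L + (-(2 * I)⁻¹) • star L := by
    funext μ ν
    simp only [im_eq_sub_conj, Pi.add_apply, Pi.smul_apply, Pi.star_apply, smul_eq_mul,
      star_def]
    field_simp
    ring
  rw [hre, him, hodge_add, hodge_smul, hodge_smul, hodge_star, h, star_smul,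
    star_eq_neg_of_sq_eq_neg_one hc]
  funext μ ν
  simp only [neg_smul, smul_neg, Pi.add_apply, Pi.smul_apply, Pi.neg_apply, Pi.star_apply,
    smul_eq_mul, star_def, mul_inv_rev, inv_I, neg_mul, neg_neg]
  linear_combination (c * L μ ν - c * starRingEnd ℂ (L μ ν)) / 2 * I_sq

/-- if a complex antisymmetric rank-2 tensor `L` on Minkowski space is an
eigenvector of the Hodge star, `*L = λ L`, then `[Re L, Im L] = 0`. -/
theorem re_im_commute_of_hodge_eigenvector (L : Fin 4 → Fin 4 → ℂ)
    (hL : ∀ μ ν, L μ ν = - L ν μ) (lam : ℂ)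
    (heig : ∀ μ ν, hodge L μ ν = lam * L μ ν) :
    ∀ τ ρ, commT (fun μ ν => (((L μ ν).re : ℝ) : ℂ)) (fun μ ν => (((L μ ν).im : ℝ) : ℂ)) τ ρ = 0 := by
  intro τ ρ
  by_cases hL0 : L = 0
  · simp [hL0, commT]
  have hlam := sq_eq_neg_one_of_hodge_eq_smul hL hL0 (funext₂ heig)
  have hre_anti : ∀ μ ν, ((L μ ν).re : ℂ) = -((L ν μ).re : ℂ) := fun μ ν => by simp [hL μ ν]
  have hlamI : lam * I ≠ 0 := mul_ne_zero (fun h => by simp [h] at hlam) I_ne_zero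
  have hcomm := commT_hodge_self hre_anti
  rw [hodge_re_eq_smul_im (funext₂ heig) hlam, commT_smul_right, smul_eq_zero] at hcomm
  exact congrFun₂ (hcomm.resolve_left hlamI) τ ρ
end
end

section
/- Let u be a smooth complex-valued vector field on Minkowski space and let L ≠ 0 be a constant complex antisymmetric rank-2 tensor with *L = α̃i L for α̃ = ±1. Define the contortion K^λ_{μν}(x) := Re(u_μ(x) L^λ_ν) and write K_μ for the matrix (K^κ_{μλ}). Then all the nonlinear (commutator) terms vanish: [K_μ, K_ν] = 0 for all μ, ν and all x, and consequently the curvature matrix R_{μν} := ∂_μK_ν − ∂_νK_μ + [K_μ,K_ν] equals ∂_μK_ν − ∂_νK_μ = Re((du)_{μν} L) and satisfies [K_ν, R^{μν}] = 0 for all μ. -/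
noncomputable section
open Complex Finset

/-- The partial derivative `∂_μ` of a function on Minkowski space `ℝ⁴`. -/
def pd {E : Type*} [NormedAddCommGroup E] [NormedSpace ℝ E]
    (μ : Fin 4) (f : (Fin 4 → ℝ) → E) (x : Fin 4 → ℝ) : E :=
  fderiv ℝ f x (Pi.single μ 1)

/-- The exterior derivative of a complex vector field: `(du)_{μν} = ∂_μ u_ν − ∂_ν u_μ`. -/
def dEx (u : (Fin 4 → ℝ) → Fin 4 → ℂ) (x : Fin 4 → ℝ) (μ ν : Fin 4) : ℂ :=
  pd μ (fun y => u y ν) x - pd ν (fun y => u y μ) x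

/-- `L` with its first index raised by the Minkowski metric: `L^λ_ν`. -/
def upFirst (L : Fin 4 → Fin 4 → ℂ) (lam ν : Fin 4) : ℂ := ((gR lam lam : ℝ) : ℂ) * L lam ν

/-- The contortion `K^λ_{μν}(x) := Re (u_μ(x) L^λ_ν)`. -/
def contortion (u : (Fin 4 → ℝ) → Fin 4 → ℂ) (L : Fin 4 → Fin 4 → ℂ)
    (x : Fin 4 → ℝ) (lam μ ν : Fin 4) : ℝ :=
  (u x μ * upFirst L lam ν).re

/-- The matrix `K_μ = (K^κ_{μλ})`, `κ` enumerating rows, `λ` columns. -/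
def Kmat (u : (Fin 4 → ℝ) → Fin 4 → ℂ) (L : Fin 4 → Fin 4 → ℂ)
    (x : Fin 4 → ℝ) (μ : Fin 4) (κ lam : Fin 4) : ℝ :=
  contortion u L x κ μ lam

/-- The matrix commutator `[A,B]^τ_λ = A^τ_κ B^κ_λ − B^τ_κ A^κ_λ` of mixed rank-2 tensors. -/
def mcomm (A B : Fin 4 → Fin 4 → ℝ) (τ lam : Fin 4) : ℝ :=
  ∑ κ : Fin 4, (A τ κ * B κ lam - B τ κ * A κ lam)

/-- The curvature matrix `R_{μν} := ∂_μ K_ν − ∂_ν K_μ + [K_μ, K_ν]` (entries `R^κ_{λμν}`). -/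
def curv (u : (Fin 4 → ℝ) → Fin 4 → ℂ) (L : Fin 4 → Fin 4 → ℂ)
    (x : Fin 4 → ℝ) (μ ν κ lam : Fin 4) : ℝ :=
  pd μ (fun y => Kmat u L y ν κ lam) x - pd ν (fun y => Kmat u L y μ κ lam) x
    + mcomm (Kmat u L x μ) (Kmat u L x ν) κ lam


/-- Auxiliary: derivative of the real part of a product with a constant. -/
lemma pd_re_mul_aux (f : (Fin 4 → ℝ) → ℂ) (x : Fin 4 → ℝ) (hf : DifferentiableAt ℝ f x)
    (c : ℂ) (μ : Fin 4) :
    pd μ (fun y => (f y * c).re) x = (pd μ f x * c).re := by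
  unfold pd
  have h1 : (fun y => (f y * c).re) = fun y => Complex.reCLM (f y * c) := rfl
  have h3 := hf.hasFDerivAt.mul_const' c
  have h4 : HasFDerivAt (fun y => Complex.reCLM (f y * c))
      (Complex.reCLM.comp ((fderiv ℝ f x).smulRight c)) x :=
    Complex.reCLM.hasFDerivAt.comp x h3
  rw [h1, h4.fderiv]
  simp [smul_eq_mul]

set_option maxHeartbeats 1000000 in
/-- Auxiliary: an (anti-)self-dual antisymmetric `L` (first index raised) commutes with its
complex conjugate. -/
lemma key_commute (L : Fin 4 → Fin 4 → ℂ) (hLanti : ∀ μ ν, L μ ν = - L ν μ)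
    (at' : ℝ) (hat : at' = 1 ∨ at' = -1)
    (hLpol : ∀ μ ν, hodge L μ ν = (at' : ℂ) * Complex.I * L μ ν)
    (τ lam : Fin 4) :
    ∑ κ : Fin 4, upFirst L τ κ * (starRingEnd ℂ) (upFirst L κ lam)
      = ∑ κ : Fin 4, (starRingEnd ℂ) (upFirst L τ κ) * upFirst L κ lam := by
  have v3 : ((3:Fin 4):ℕ) = 3 := rfl
  have v2 : ((2:Fin 4):ℕ) = 2 := rfl
  have h23 : L 2 3 = at' * Complex.I * L 0 1 := by
    have h := hLpol 0 1
    have h32 := hLanti 3 2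
    simp [hodge, eps, fv, gR, Fin.sum_univ_four, h32, v3, v2] at h
    norm_num at h; linear_combination h
  have h13 : L 1 3 = -(at' * Complex.I * L 0 2) := by
    have h := hLpol 0 2
    have h31 := hLanti 3 1
    simp [hodge, eps, fv, gR, Fin.sum_univ_four, h31, v3, v2] at h
    norm_num at h; linear_combination -h
  have h12 : L 1 2 = at' * Complex.I * L 0 3 := by
    have h := hLpol 0 3
    have h21 := hLanti 2 1
    simp [hodge, eps, fv, gR, Fin.sum_univ_four, h21, v3, v2] at h
    norm_num at h; linear_combination h
  have d0 : L 0 0 = 0 := by have h := hLanti 0 0; linear_combination h/2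
  have d1 : L 1 1 = 0 := by have h := hLanti 1 1; linear_combination h/2
  have d2 : L 2 2 = 0 := by have h := hLanti 2 2; linear_combination h/2
  have d3 : L 3 3 = 0 := by have h := hLanti 3 3; linear_combination h/2
  have h10 := hLanti 1 0
  have h20 := hLanti 2 0
  have h30 := hLanti 3 0
  have h21 := hLanti 2 1
  have h31 := hLanti 3 1
  have h32 := hLanti 3 2
  rcases hat with rfl | rfl <;>
  · fin_cases τ <;> fin_cases lam <;>
    · simp only [Fin.reduceFinMk, Fin.sum_univ_four, upFirst, gR, Fin.isValue, reduceIte,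
        d0, d1, d2, d3, h10, h20, h30, h21, h32, h31, h23, h13, h12,
        map_mul, map_neg, map_one, Complex.conj_I, Complex.conj_ofReal,
        Complex.ofReal_one, Complex.ofReal_neg]
      ring_nf
      try simp [Complex.ext_iff, Complex.mul_re, Complex.mul_im]
      all_goals try constructor
      all_goals ring

/-- Auxiliary: real-part coercion rewriting. -/
lemma myre_aux (z : ℂ) : ((z.re : ℝ) : ℂ) = (z + (starRingEnd ℂ) z)/2 := by
  rw [Complex.add_conj]; push_cast; ring

/-- Auxiliary: commutators of real parts of scalar multiples of `upFirst L` vanish. -/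
lemma comm_zero_aux (L : Fin 4 → Fin 4 → ℂ) (hLanti : ∀ μ ν, L μ ν = - L ν μ)
    (at' : ℝ) (hat : at' = 1 ∨ at' = -1)
    (hLpol : ∀ μ ν, hodge L μ ν = (at' : ℂ) * Complex.I * L μ ν)
    (a b : ℂ) (τ lam : Fin 4) :
    ∑ κ : Fin 4, ((a * upFirst L τ κ).re * (b * upFirst L κ lam).re
      - (b * upFirst L τ κ).re * (a * upFirst L κ lam).re) = 0 := by
  have k : ∑ κ : Fin 4, upFirst L τ κ * (starRingEnd ℂ) (upFirst L κ lam)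
      = ∑ κ : Fin 4, (starRingEnd ℂ) (upFirst L τ κ) * upFirst L κ lam :=
    key_commute L hLanti at' hat hLpol τ lam
  rw [← Complex.ofReal_eq_zero]
  push_cast [Fin.sum_univ_four]
  simp only [Fin.sum_univ_four] at k
  simp only [myre_aux, map_mul]
  linear_combination ((a * (starRingEnd ℂ) b - (starRingEnd ℂ) a * b)/4) * k

/-- linearization ansatz: for smooth `u` and a constant complex antisymmetric
`L ≠ 0` with `*L = α̃ i L` (`α̃ = ±1`), the contortion `K^λ_{μν} = Re(u_μ L^λ_ν)` has
`[K_μ, K_ν] = 0`, its curvature is `R_{μν} = ∂_μ K_ν − ∂_ν K_μ = Re((du)_{μν} L)` (with the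
first index of `L` raised), and `[K_ν, R^{μν}] = 0` for all `μ`. -/
theorem linearization_ansatz (u : (Fin 4 → ℝ) → Fin 4 → ℂ)
    (hu : ∀ ν, ContDiff ℝ (⊤ : ℕ∞) (fun x => u x ν))
    (L : Fin 4 → Fin 4 → ℂ) (hLne : L ≠ 0) (hLanti : ∀ μ ν, L μ ν = - L ν μ)
    (at' : ℝ) (hat : at' = 1 ∨ at' = -1)
    (hLpol : ∀ μ ν, hodge L μ ν = (at' : ℂ) * Complex.I * L μ ν) :
    (∀ x μ ν κ lam, mcomm (Kmat u L x μ) (Kmat u L x ν) κ lam = 0) ∧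
    (∀ x μ ν κ lam, curv u L x μ ν κ lam =
      pd μ (fun y => Kmat u L y ν κ lam) x - pd ν (fun y => Kmat u L y μ κ lam) x
      ∧ curv u L x μ ν κ lam = (dEx u x μ ν * upFirst L κ lam).re) ∧
    (∀ x μ κ lam, ∑ ν : Fin 4,
      gR μ μ * gR ν ν * mcomm (Kmat u L x ν) (fun a b => curv u L x μ ν a b) κ lam = 0) := by
  have hdiff : ∀ ν x, DifferentiableAt ℝ (fun y => u y ν) x := fun ν x =>
    ((hu ν).differentiable (by simp)).differentiableAt
  have part1 : ∀ x μ ν κ lam, mcomm (Kmat u L x μ) (Kmat u L x ν) κ lam = 0 := by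
    intro x μ ν κ lam
    have h := comm_zero_aux L hLanti at' hat hLpol (u x μ) (u x ν) κ lam
    simpa [mcomm, Kmat, contortion] using h
  have hK : ∀ (y : Fin 4 → ℝ) ν κ lam, Kmat u L y ν κ lam = (u y ν * upFirst L κ lam).re :=
    fun y ν κ lam => rfl
  have hpd : ∀ (x : Fin 4 → ℝ) μ ν κ lam, pd μ (fun y => Kmat u L y ν κ lam) x
      = (pd μ (fun y => u y ν) x * upFirst L κ lam).re := by
    intro x μ ν κ lam
    simpa [hK] using pd_re_mul_aux (fun y => u y ν) x (hdiff ν x) (upFirst L κ lam) μ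
  have part2 : ∀ x μ ν κ lam, curv u L x μ ν κ lam =
      pd μ (fun y => Kmat u L y ν κ lam) x - pd ν (fun y => Kmat u L y μ κ lam) x
      ∧ curv u L x μ ν κ lam = (dEx u x μ ν * upFirst L κ lam).re := by
    intro x μ ν κ lam
    have h1 : curv u L x μ ν κ lam =
        pd μ (fun y => Kmat u L y ν κ lam) x - pd ν (fun y => Kmat u L y μ κ lam) x := by
      unfold curv
      rw [part1]
      ring
    refine ⟨h1, ?_⟩
    rw [h1, hpd, hpd]
    unfold dEx
    rw [sub_mul, Complex.sub_re]
  refine ⟨part1, part2, ?_⟩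
  intro x μ κ lam
  apply Finset.sum_eq_zero
  intro ν _
  have hcurv : (fun a b => curv u L x μ ν a b) = fun a b => (dEx u x μ ν * upFirst L a b).re := by
    funext a b
    exact (part2 x μ ν a b).2
  have h := comm_zero_aux L hLanti at' hat hLpol (u x ν) (dEx u x μ ν) κ lam
  rw [hcurv]
  have hm : mcomm (Kmat u L x ν) (fun a b => (dEx u x μ ν * upFirst L a b).re) κ lam = 0 := by
    simpa [mcomm, Kmat, contortion] using h
  rw [hm]
  ring
end
end

section
/- Let u be a smooth complex-valued vector field on Minkowski space satisfying the Maxwell equation δdu = 0, i.e. ∂^μ(du)_{μν} = 0 for each ν, and let L ≠ 0 be a constant complex antisymmetric rank-2 tensor with *L = α̃i L for α̃ = ±1. Then the contortion K^λ_{μν}(x) := Re(u_μ(x) L^λ_ν), with curvature R_{μν} := ∂_μK_ν − ∂_νK_μ + [K_μ,K_ν] (matrix notation K_μ := (K^κ_{μλ})), satisfies the Yang–Mills equation ∂_ν R^{μν} + [K_ν, R^{μν}] = 0 for each μ. -/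
noncomputable section
open Complex Finset

/-! ### Auxiliary lemmas -/

lemma gR00 : gR 0 0 = 1 := by rw [gR]; norm_num
lemma gR11 : gR 1 1 = -1 := by rw [gR]; simp [show (1:Fin 4) ≠ 0 by decide]
lemma gR22 : gR 2 2 = -1 := by rw [gR]; simp [show (2:Fin 4) ≠ 0 by decide]
lemma gR33 : gR 3 3 = -1 := by rw [gR]; simp [show (3:Fin 4) ≠ 0 by decide]

lemma fv0 : fv 0 = 0 := by rw [fv, show ((0:Fin 4):ℕ) = 0 from rfl]; norm_num
lemma fv1 : fv 1 = 1 := by rw [fv, show ((1:Fin 4):ℕ) = 1 from rfl]; norm_num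
lemma fv2 : fv 2 = 2 := by rw [fv, show ((2:Fin 4):ℕ) = 2 from rfl]; norm_num
lemma fv3 : fv 3 = 3 := by rw [fv, show ((3:Fin 4):ℕ) = 3 from rfl]; norm_num

lemma contDiff_pd {f : (Fin 4 → ℝ) → ℂ} (hf : ContDiff ℝ (⊤ : ℕ∞) f) (μ : Fin 4) :
    ContDiff ℝ (⊤ : ℕ∞) (fun y => pd μ f y) := by
  have h := (ContinuousLinearMap.apply ℝ ℂ (Pi.single μ 1)).contDiff.comp
    (hf.fderiv_right (m := (⊤ : ℕ∞)) (by simp))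
  simpa [Function.comp_def, pd] using h

lemma pd_re {g : (Fin 4 → ℝ) → ℂ} {x : Fin 4 → ℝ} (hg : DifferentiableAt ℝ g x) (μ : Fin 4) :
    pd μ (fun y => (g y).re) x = (pd μ g x).re := by
  unfold pd
  have h : fderiv ℝ (fun y => Complex.reCLM (g y)) x = Complex.reCLM.comp (fderiv ℝ g x) :=
    (Complex.reCLM.hasFDerivAt.comp x hg.hasFDerivAt).fderiv
  simp only [Complex.reCLM_apply] at h
  rw [h]; simp

lemma pd_mul_const {g : (Fin 4 → ℝ) → ℂ} {x : Fin 4 → ℝ} (hg : DifferentiableAt ℝ g x)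
    (μ : Fin 4) (C : ℂ) : pd μ (fun y => g y * C) x = pd μ g x * C := by
  unfold pd; rw [fderiv_mul_const hg]; simp [mul_comm]

lemma pd_neg {g : (Fin 4 → ℝ) → ℂ} {x : Fin 4 → ℝ} (μ : Fin 4) :
    pd μ (fun y => -(g y)) x = -pd μ g x := by
  unfold pd; rw [fderiv_fun_neg]; simp

/-! ### Main theorem -/

/-- if smooth `u` satisfies the Maxwell equation `δ du = 0`, i.e.
`∂^μ (du)_{μν} = 0`, and `L ≠ 0` is a constant complex antisymmetric tensor with
`*L = α̃ i L` (`α̃ = ±1`), then the contortion `K^λ_{μν} = Re(u_μ L^λ_ν)` with curvature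
`R_{μν} = ∂_μ K_ν − ∂_ν K_μ + [K_μ, K_ν]` satisfies the Yang--Mills equation
`∂_ν R^{μν} + [K_ν, R^{μν}] = 0` for each `μ`. -/
theorem yang_mills_from_maxwell (u : (Fin 4 → ℝ) → Fin 4 → ℂ)
    (hu : ∀ ν, ContDiff ℝ (⊤ : ℕ∞) (fun x => u x ν))
    (hmaxwell : ∀ x ν, ∑ μ : Fin 4, ((gR μ μ : ℝ) : ℂ) * pd μ (fun y => dEx u y μ ν) x = 0)
    (L : Fin 4 → Fin 4 → ℂ) (hLne : L ≠ 0) (hLanti : ∀ μ ν, L μ ν = - L ν μ)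
    (at' : ℝ) (hat : at' = 1 ∨ at' = -1)
    (hLpol : ∀ μ ν, hodge L μ ν = (at' : ℂ) * Complex.I * L μ ν) :
    ∀ x μ κ lam, ∑ ν : Fin 4, gR μ μ * gR ν ν *
      (pd ν (fun y => curv u L y μ ν κ lam) x
        + mcomm (Kmat u L x ν) (fun a b => curv u L x μ ν a b) κ lam) = 0 := by
  -- diagonal entries vanish
  have hdiag : ∀ i, L i i = 0 := by
    intro i
    have h2 : (2:ℂ) * L i i = 0 := by linear_combination (hLanti i i)
    rcases mul_eq_zero.mp h2 with h | h
    · norm_num at h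
    · exact h
  -- self-duality relations
  have e23 : L 2 3 = (at' : ℂ) * Complex.I * L 0 1 := by
    have h := hLpol 0 1
    rw [hodge] at h
    simp only [Fin.sum_univ_four] at h
    rw [hLanti 3 2] at h
    norm_num [gR00, gR11, gR22, gR33, eps, fv0, fv1, fv2, fv3, hdiag,
      hLanti 1 0, hLanti 2 0, hLanti 3 0, hLanti 2 1, hLanti 3 1] at h
    linear_combination h
  have e13 : L 1 3 = -((at' : ℂ) * Complex.I * L 0 2) := by
    have h := hLpol 0 2
    rw [hodge] at h
    simp only [Fin.sum_univ_four] at h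
    rw [hLanti 3 1] at h
    norm_num [gR00, gR11, gR22, gR33, eps, fv0, fv1, fv2, fv3, hdiag,
      hLanti 1 0, hLanti 2 0, hLanti 3 0, hLanti 2 1, hLanti 3 2] at h
    linear_combination -h
  have e12 : L 1 2 = (at' : ℂ) * Complex.I * L 0 3 := by
    have h := hLpol 0 3
    rw [hodge] at h
    simp only [Fin.sum_univ_four] at h
    rw [hLanti 2 1] at h
    norm_num [gR00, gR11, gR22, gR33, eps, fv0, fv1, fv2, fv3, hdiag,
      hLanti 1 0, hLanti 2 0, hLanti 3 0, hLanti 3 1, hLanti 3 2] at h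
    linear_combination h
  have e10 : L 1 0 = -L 0 1 := hLanti 1 0
  have e20 : L 2 0 = -L 0 2 := hLanti 2 0
  have e30 : L 3 0 = -L 0 3 := hLanti 3 0
  have e21 : L 2 1 = -((at' : ℂ) * Complex.I * L 0 3) := by rw [hLanti 2 1, e12]
  have e31 : L 3 1 = (at' : ℂ) * Complex.I * L 0 2 := by rw [hLanti 3 1, e13]; ring
  have e32 : L 3 2 = -((at' : ℂ) * Complex.I * L 0 1) := by rw [hLanti 3 2, e23]
  -- the key reality property of S = L' · conj(L')
  have hS : ∀ τ l0 : Fin 4,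
      (∑ c : Fin 4, upFirst L τ c * (starRingEnd ℂ) (upFirst L c l0)).im = 0 := by
    intro τ l0
    fin_cases τ <;> fin_cases l0 <;>
    · simp only [show (⟨0, by norm_num⟩ : Fin 4) = 0 from rfl,
        show (⟨1, by norm_num⟩ : Fin 4) = 1 from rfl,
        show (⟨2, by norm_num⟩ : Fin 4) = 2 from rfl,
        show (⟨3, by norm_num⟩ : Fin 4) = 3 from rfl,
        Fin.sum_univ_four, upFirst, Fin.isValue, gR00, gR11, gR22, gR33,
        hdiag, e10, e20, e30, e21, e31, e32, e12, e13, e23]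
      obtain rfl | rfl := hat <;>
      · simp only [map_mul, map_neg, map_one, Complex.conj_I, Complex.conj_ofReal,
          Complex.ofReal_one, Complex.ofReal_neg]
        simp only [Complex.add_im, Complex.mul_im, Complex.mul_re, Complex.neg_im,
          Complex.neg_re, Complex.I_re, Complex.I_im, Complex.conj_re, Complex.conj_im,
          Complex.one_re, Complex.one_im, Complex.ofReal_re, Complex.ofReal_im,
          Complex.zero_re, Complex.zero_im]
        ring
  -- the commutator structure lemma
  have hptwise : ∀ (p q X Y : ℂ), (p * X).re * (q * Y).re - (q * X).re * (p * Y).re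
      = -((p * (starRingEnd ℂ) q).im * (X * (starRingEnd ℂ) Y).im) := by
    intro p q X Y
    simp only [Complex.mul_re, Complex.mul_im, Complex.conj_re, Complex.conj_im]
    ring
  have hcomm : ∀ (p q : ℂ) (κ0 l0 : Fin 4),
      ∑ c : Fin 4, ((p * upFirst L κ0 c).re * (q * upFirst L c l0).re
        - (q * upFirst L κ0 c).re * (p * upFirst L c l0).re) = 0 := by
    intro p q κ0 l0
    have h1 : ∀ c : Fin 4, (p * upFirst L κ0 c).re * (q * upFirst L c l0).re
        - (q * upFirst L κ0 c).re * (p * upFirst L c l0).re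
        = -((p * (starRingEnd ℂ) q).im
            * (upFirst L κ0 c * (starRingEnd ℂ) (upFirst L c l0)).im) :=
      fun c => hptwise p q _ _
    rw [Finset.sum_congr rfl (fun c _ => h1 c), Finset.sum_neg_distrib, ← Finset.mul_sum,
      ← Complex.im_sum, hS, mul_zero, neg_zero]
  -- Kmat entries
  have hKrw : ∀ (y : Fin 4 → ℝ) (μ0 κ0 l0 : Fin 4),
      Kmat u L y μ0 κ0 l0 = (u y μ0 * upFirst L κ0 l0).re := fun _ _ _ _ => rfl
  have hKK : ∀ (y : Fin 4 → ℝ) (μ0 ν0 κ0 l0 : Fin 4),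
      mcomm (Kmat u L y μ0) (Kmat u L y ν0) κ0 l0 = 0 := by
    intro y μ0 ν0 κ0 l0
    rw [mcomm]
    simp only [hKrw]
    exact hcomm (u y μ0) (u y ν0) κ0 l0
  -- differentiability facts
  have hud : ∀ ν0, Differentiable ℝ (fun y => u y ν0) := fun ν0 => (hu ν0).differentiable (by simp)
  have hdEx : ∀ μ0 ν0 : Fin 4, ContDiff ℝ (⊤ : ℕ∞) (fun y => dEx u y μ0 ν0) := by
    intro μ0 ν0
    unfold dEx
    exact (contDiff_pd (hu ν0) μ0).sub (contDiff_pd (hu μ0) ν0)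
  -- curvature formula
  have curv_eq : ∀ (y : Fin 4 → ℝ) (μ0 ν0 κ0 l0 : Fin 4),
      curv u L y μ0 ν0 κ0 l0 = (dEx u y μ0 ν0 * upFirst L κ0 l0).re := by
    intro y μ0 ν0 κ0 l0
    rw [curv, hKK, add_zero]
    have h1 : (fun z => Kmat u L z ν0 κ0 l0)
        = fun z => ((fun w => u w ν0 * upFirst L κ0 l0) z).re := rfl
    have h2 : (fun z => Kmat u L z μ0 κ0 l0)
        = fun z => ((fun w => u w μ0 * upFirst L κ0 l0) z).re := rfl
    rw [h1, h2, pd_re ((hud ν0 y).mul_const _) μ0, pd_re ((hud μ0 y).mul_const _) ν0,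
      pd_mul_const (hud ν0 y) μ0, pd_mul_const (hud μ0 y) ν0, ← Complex.sub_re, ← sub_mul]
    rfl
  -- now the main computation
  intro x μ κ lam
  have hm2 : ∀ ν0 : Fin 4,
      mcomm (Kmat u L x ν0) (fun a b => curv u L x μ ν0 a b) κ lam = 0 := by
    intro ν0
    have h : (fun a b => curv u L x μ ν0 a b)
        = fun a b => (dEx u x μ ν0 * upFirst L a b).re := by
      funext a b; exact curv_eq x μ ν0 a b
    rw [h, mcomm]
    simp only [hKrw]
    exact hcomm (u x ν0) (dEx u x μ ν0) κ lam
  have hp : ∀ ν0 : Fin 4, pd ν0 (fun y => curv u L y μ ν0 κ lam) x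
      = (pd ν0 (fun y => dEx u y μ ν0) x * upFirst L κ lam).re := by
    intro ν0
    have h : (fun y => curv u L y μ ν0 κ lam)
        = fun y => ((fun z => dEx u z μ ν0 * upFirst L κ lam) y).re := by
      funext y; exact curv_eq y μ ν0 κ lam
    rw [h, pd_re ((((hdEx μ ν0).differentiable (by simp)) x).mul_const _) ν0,
      pd_mul_const (((hdEx μ ν0).differentiable (by simp)) x) ν0]
  simp only [hp, hm2, add_zero]
  have hterm : ∀ ν0 : Fin 4,
      gR μ μ * gR ν0 ν0 * (pd ν0 (fun y => dEx u y μ ν0) x * upFirst L κ lam).re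
      = (((gR μ μ * gR ν0 ν0 : ℝ) : ℂ)
          * (pd ν0 (fun y => dEx u y μ ν0) x * upFirst L κ lam)).re := by
    intro ν0; rw [Complex.re_ofReal_mul]
  rw [Finset.sum_congr rfl (fun ν0 _ => hterm ν0), ← Complex.re_sum]
  have hflip : ∀ ν0 : Fin 4, pd ν0 (fun y => dEx u y μ ν0) x
      = -pd ν0 (fun y => dEx u y ν0 μ) x := by
    intro ν0
    have h : (fun y => dEx u y μ ν0) = fun y => -((fun z => dEx u z ν0 μ) y) := by
      funext y; simp only [dEx]; ring
    rw [h, pd_neg]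
  have hz : ∑ ν0 : Fin 4, (((gR μ μ * gR ν0 ν0 : ℝ) : ℂ)
      * (pd ν0 (fun y => dEx u y μ ν0) x * upFirst L κ lam)) = 0 := by
    have hre : ∀ ν0 : Fin 4, (((gR μ μ * gR ν0 ν0 : ℝ) : ℂ)
        * (pd ν0 (fun y => dEx u y μ ν0) x * upFirst L κ lam))
        = (((gR ν0 ν0 : ℝ) : ℂ) * pd ν0 (fun y => dEx u y ν0 μ) x)
          * (-(((gR μ μ : ℝ) : ℂ)) * upFirst L κ lam) := by
      intro ν0; rw [hflip ν0]; push_cast; ring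
    rw [Finset.sum_congr rfl (fun ν0 _ => hre ν0), ← Finset.sum_mul, hmaxwell x μ, zero_mul]
  rw [hz]
  simp
end
end

section
/- For any (possibly complex) antisymmetric rank-2 tensors L and N on Minkowski space, (*L)_{νμ}(*N)^{μρ} + (*N)_{νμ}(*L)^{μρ} = L_{νμ}N^{μρ} + N_{νμ}L^{μρ} + L_{μτ}N^{μτ} δ_ν^ρ, where δ is the identity tensor. -/
noncomputable section
open Complex Finset

/-!
An antisymmetric tensor on Minkowski space has six independent components, and the Hodge star
acts on them as the signed permutation
`(L₀₁, L₀₂, L₀₃, L₁₂, L₁₃, L₂₃) ↦ (L₂₃, -L₁₃, L₁₂, -L₀₃, L₀₂, -L₀₁)`, exchanging the electric and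
magnetic parts. After this substitution both sides are bilinear polynomials in the twelve
components of `L` and `N`, and the identity is checked entry by entry.
-/

def antisymmOfComponents (a b c d e f : ℂ) : Fin 4 → Fin 4 → ℂ :=
  ![![0, a, b, c], ![-a, 0, d, e], ![-b, -d, 0, f], ![-c, -e, -f, 0]]

lemma exists_eq_antisymmOfComponents {L : Fin 4 → Fin 4 → ℂ} (hL : ∀ μ ν, L μ ν = - L ν μ) :
    ∃ a b c d e f, L = antisymmOfComponents a b c d e f := by
  refine ⟨L 0 1, L 0 2, L 0 3, L 1 2, L 1 3, L 2 3, funext fun μ => funext fun ν => ?_⟩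
  have hdiag : ∀ μ, L μ μ = 0 := fun μ => by linear_combination hL μ μ / 2
  fin_cases μ <;> fin_cases ν <;>
    simp [antisymmOfComponents, hdiag, hL 1 0, hL 2 0, hL 3 0, hL 2 1, hL 3 1, hL 3 2]

lemma hodge_antisymmOfComponents (a b c d e f : ℂ) :
    hodge (antisymmOfComponents a b c d e f) = antisymmOfComponents f (-e) d (-c) b (-a) := by
  funext μ ν
  fin_cases μ <;> fin_cases ν <;>
    simp only [hodge, antisymmOfComponents, Fin.sum_univ_four, gR, eps, fv, Fin.isValue,
      Fin.reduceFinMk, Fin.coe_ofNat_eq_mod, Nat.reduceMod, Matrix.cons_val, Fin.reduceEq,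
      ↓reduceIte] <;>
    push_cast <;> ring

/-- for antisymmetric rank-2 tensors `L`, `N` on Minkowski space,
`(*L)_{νμ}(*N)^{μρ} + (*N)_{νμ}(*L)^{μρ} = L_{νμ}N^{μρ} + N_{νμ}L^{μρ} + L_{μτ}N^{μτ} δ_ν^ρ`. -/
theorem hodge_anticommutator_identity (L N : Fin 4 → Fin 4 → ℂ)
    (hL : ∀ μ ν, L μ ν = - L ν μ) (hN : ∀ μ ν, N μ ν = - N ν μ) (ν ρ : Fin 4) :
    ∑ μ : Fin 4, ((gR μ μ * gR ρ ρ : ℝ) : ℂ) *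
        (hodge L ν μ * hodge N μ ρ + hodge N ν μ * hodge L μ ρ)
      = (∑ μ : Fin 4, ((gR μ μ * gR ρ ρ : ℝ) : ℂ) * (L ν μ * N μ ρ + N ν μ * L μ ρ))
        + (∑ μ : Fin 4, ∑ τ : Fin 4, ((gR μ μ * gR τ τ : ℝ) : ℂ) * L μ τ * N μ τ)
          * (if ν = ρ then 1 else 0) := by
  obtain ⟨a, b, c, d, e, f, rfl⟩ := exists_eq_antisymmOfComponents hL
  obtain ⟨a', b', c', d', e', f', rfl⟩ := exists_eq_antisymmOfComponents hN
  simp only [hodge_antisymmOfComponents]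
  fin_cases ν <;> fin_cases ρ <;>
    simp only [antisymmOfComponents, Fin.sum_univ_four, gR, Fin.isValue, Fin.reduceFinMk,
      Matrix.cons_val, Fin.reduceEq, ↓reduceIte] <;>
    push_cast <;> ring
end
end

section
/- Under the hypotheses of Theorem 1 (u a non-trivial plane wave solution of *du = αi·du, L ≠ 0 a constant complex antisymmetric tensor with *L = α̃i L), the resulting connection is not flat: the Riemann curvature R_{κλμν}(x) = Re(L_{κλ}(du)_{μν}(x)) is not identically zero. -/
noncomputable section
open Complex Finset

/-- `u` is a plane wave: `u(x) = w e^{−i k·x}` with constant `w` and constant real `k ≠ 0`. -/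
def IsPlaneWave (u : (Fin 4 → ℝ) → Fin 4 → ℂ) : Prop :=
  ∃ (w : Fin 4 → ℂ) (k : Fin 4 → ℝ), k ≠ 0 ∧
    ∀ x μ, u x μ = w μ * Complex.exp (-Complex.I * ∑ ρ : Fin 4, ((k ρ : ℂ) * (x ρ : ℂ)))

/-!
For a plane wave `u = w e^{-ik·x}` the field strength is a constant bivector times the phase,
`du = -i (k ∧ w) e^{-ik·x}`. Since `k ≠ 0`, the phase `k·x` takes every real value, so if
`Re (L_{κλ} (du)_{μν})` vanished everywhere, then `Re (z e^{-iθ}) = 0` for all `θ`, where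
`z = -i L_{κλ} (k ∧ w)_{μν}`; this forces `z = 0`, i.e. `L = 0` or `du = 0`.
-/

open Matrix

lemma pd_planeWave (a : ℂ) (k x : Fin 4 → ℝ) (μ : Fin 4) :
    pd μ (fun y => a * exp (-I * ∑ ρ, (k ρ : ℂ) * (y ρ : ℂ))) x
      = -I * k μ * (a * exp (-I * ∑ ρ, (k ρ : ℂ) * (x ρ : ℂ))) := by
  have hphase : HasFDerivAt (fun y : Fin 4 → ℝ => ∑ ρ, (k ρ : ℂ) * (y ρ : ℂ))
      (∑ ρ, (k ρ : ℂ) • ofRealCLM.comp (ContinuousLinearMap.proj ρ)) x :=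
    HasFDerivAt.fun_sum fun ρ _ =>
      ((ofRealCLM.comp (ContinuousLinearMap.proj (R := ℝ) (φ := fun _ : Fin 4 => ℝ) ρ)).hasFDerivAt
        (x := x)).const_mul (k ρ : ℂ)
  rw [pd, ((hphase.const_mul (-I)).cexp.const_mul a).fderiv]
  simp [Pi.single_apply, apply_ite ofReal]
  ring

lemma dEx_planeWave {u : (Fin 4 → ℝ) → Fin 4 → ℂ} {w : Fin 4 → ℂ} {k : Fin 4 → ℝ}
    (hu : ∀ x μ, u x μ = w μ * exp (-I * ∑ ρ, (k ρ : ℂ) * (x ρ : ℂ))) (x : Fin 4 → ℝ)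
    (μ ν : Fin 4) :
    dEx u x μ ν = -I * (k μ * w ν - k ν * w μ) * exp (-I * ∑ ρ, (k ρ : ℂ) * (x ρ : ℂ)) := by
  have hcomp : ∀ σ, (fun y => u y σ) = fun y => w σ * exp (-I * ∑ ρ, (k ρ : ℂ) * (y ρ : ℂ)) :=
    fun σ => funext fun y => hu y σ
  rw [dEx, hcomp, hcomp, pd_planeWave, pd_planeWave]
  ring

lemma exists_dotProduct_eq {ι : Type*} [Fintype ι] {k : ι → ℝ} (hk : k ≠ 0) (t : ℝ) :
    ∃ x, k ⬝ᵥ x = t :=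
  ⟨(t / (k ⬝ᵥ k)) • k, by
    rw [dotProduct_smul, smul_eq_mul, div_mul_cancel₀ _ (mt dotProduct_self_eq_zero.mp hk)]⟩

lemma eq_zero_of_forall_re_mul_exp_eq_zero {z : ℂ} (h : ∀ t : ℝ, (z * exp (-I * t)).re = 0) :
    z = 0 := by
  have hre : z.re = 0 := by simpa using h 0
  have him : z.im = 0 := by
    have h' := h (-(Real.pi / 2))
    rw [ofReal_neg, ofReal_div, ofReal_ofNat, show -I * -(↑Real.pi / 2) = ↑Real.pi / 2 * I by ring,
      exp_pi_div_two_mul_I] at h'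
    simpa using h'
  exact Complex.ext hre him

theorem connection_not_flat_general (u : (Fin 4 → ℝ) → Fin 4 → ℂ)
    (hpw : IsPlaneWave u)
    (hnt : ¬ (∀ x μ ν, dEx u x μ ν = 0))
    (L : Fin 4 → Fin 4 → ℂ) (hLne : L ≠ 0) :
    ¬ (∀ x κ lam μ ν, (L κ lam * dEx u x μ ν).re = 0) := by
  intro hflat
  obtain ⟨w, k, hk, hu⟩ := hpw
  simp only [not_forall] at hnt
  obtain ⟨x₀, μ, ν, hdu⟩ := hnt
  obtain ⟨κ, lam, hL⟩ : ∃ κ lam, L κ lam ≠ 0 := by simpa [funext_iff] using hLne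
  have hc : -I * (k μ * w ν - k ν * w μ) ≠ 0 := by
    intro hc
    exact hdu (by rw [dEx_planeWave hu, hc, zero_mul])
  refine mul_ne_zero hL hc (eq_zero_of_forall_re_mul_exp_eq_zero fun t => ?_)
  obtain ⟨x, hx⟩ := exists_dotProduct_eq hk t
  have hphase : ∑ ρ, (k ρ : ℂ) * (x ρ : ℂ) = t := by
    rw [← hx]
    push_cast [dotProduct]
    rfl
  simpa only [dEx_planeWave hu, hphase, mul_assoc] using hflat x κ lam μ ν

/-- under the hypotheses of Theorem 1 (`u` a non-trivial plane wave solution of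
`*du = α i du`, `L ≠ 0` constant complex antisymmetric with `*L = α̃ i L`), the connection is
not flat: the Riemann curvature `R_{κλμν}(x) = Re(L_{κλ} (du)_{μν}(x))` is not identically
zero. -/
theorem connection_not_flat (u : (Fin 4 → ℝ) → Fin 4 → ℂ)
    (hpw : IsPlaneWave u)
    (hnt : ¬ (∀ x μ ν, dEx u x μ ν = 0))
    (α : ℝ) (hα : α = 1 ∨ α = -1)
    (hpol : ∀ x μ ν, hodge (dEx u x) μ ν = (α : ℂ) * Complex.I * dEx u x μ ν)
    (L : Fin 4 → Fin 4 → ℂ) (hLne : L ≠ 0) (hLanti : ∀ μ ν, L μ ν = - L ν μ)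
    (at' : ℝ) (hat : at' = 1 ∨ at' = -1)
    (hLpol : ∀ μ ν, hodge L μ ν = (at' : ℂ) * Complex.I * L μ ν) :
    ¬ (∀ x κ lam μ ν, (L κ lam * dEx u x μ ν).re = 0) :=
  connection_not_flat_general u hpw hnt L hLne
end
end

section
/- Every non-trivial plane wave solution of the polarized Maxwell equation is, up to a proper orthochronous Lorentz transformation, of the canonical form with w = C(0,1,−αi,0) and k = β(1,0,0,1): if u(x) = w·e^{−ik·x} is a non-trivial plane wave solution of *du = αi·du (α = ±1), then there exist a real 4×4 matrix Λ with Λᵀ η Λ = η (η = diag(+1,−1,−1,−1)), det Λ = 1 and Λ⁰₀ ≥ 1, a constant C > 0 and β ∈ {+1,−1}, such that for all x, Λ^κ_μ Λ^λ_ν (du)_{κλ}(Λx) = (du₀)_{μν}(x), where u₀(x) := C(0,1,−αi,0)·e^{−iβ(x⁰+x³)}. -/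
set_option linter.unnecessarySeqFocus false
set_option linter.unusedTactic false
set_option maxHeartbeats 1600000

noncomputable section
open Complex Finset

/-- The canonical plane wave `u₀(x) = C (0,1,−α i,0) e^{−i β (x⁰ + x³)}`. -/
def canonicalWave (C α β : ℝ) (x : Fin 4 → ℝ) (μ : Fin 4) : ℂ :=
  (C : ℂ) * (![0, 1, -(α : ℂ) * Complex.I, 0] μ) *
    Complex.exp (-Complex.I * (β : ℂ) * (((x 0 : ℝ) : ℂ) + ((x 3 : ℝ) : ℂ)))

/-! ### Auxiliary infrastructure -/

abbrev M4' := Matrix (Fin 4) (Fin 4) ℝ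
def etaM : M4' := Matrix.of fun μ ν => gR μ ν
def mvC (M : M4') (v : Fin 4 → ℂ) : Fin 4 → ℂ := fun μ => ∑ ν : Fin 4, ((M μ ν : ℝ) : ℂ) * v ν

def Etriple (α : ℝ) (k : Fin 4 → ℝ) (w : Fin 4 → ℂ) : Prop :=
  ((k 2 : ℂ) * w 3 - (k 3 : ℂ) * w 2 = (α : ℂ) * Complex.I * ((k 0 : ℂ) * w 1 - (k 1 : ℂ) * w 0)) ∧
  ((k 3 : ℂ) * w 1 - (k 1 : ℂ) * w 3 = (α : ℂ) * Complex.I * ((k 0 : ℂ) * w 2 - (k 2 : ℂ) * w 0)) ∧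
  ((k 1 : ℂ) * w 2 - (k 2 : ℂ) * w 1 = (α : ℂ) * Complex.I * ((k 0 : ℂ) * w 3 - (k 3 : ℂ) * w 0))

def Good (M : M4') : Prop :=
  M * etaM * M.transpose = etaM ∧ M.transpose * etaM * M = etaM ∧ M.det = 1 ∧
  (∀ v : Fin 4 → ℂ, mvC M v = 0 → v = 0) ∧
  (∀ (α : ℝ) (k : Fin 4 → ℝ) (w : Fin 4 → ℂ), α^2 = 1 → Etriple α k w →
    Etriple α (M.mulVec k) (mvC M w))

lemma mvC_comp (M N : M4') (v : Fin 4 → ℂ) : mvC (M * N) v = mvC M (mvC N v) := by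
  funext μ
  simp only [mvC, Matrix.mul_apply]
  push_cast
  simp only [Finset.sum_mul, Finset.mul_sum]
  rw [Finset.sum_comm]
  exact Finset.sum_congr rfl fun j _ => Finset.sum_congr rfl fun i _ => by ring

lemma good_mul {M N : M4'} (hM : Good M) (hN : Good N) : Good (M * N) := by
  obtain ⟨h1, h2, h3, h4, h5⟩ := hM
  obtain ⟨g1, g2, g3, g4, g5⟩ := hN
  refine ⟨?_, ?_, ?_, ?_, ?_⟩
  · rw [Matrix.transpose_mul, show M * N * etaM * (N.transpose * M.transpose)
      = M * (N * etaM * N.transpose) * M.transpose by noncomm_ring, g1, h1]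
  · rw [Matrix.transpose_mul, show N.transpose * M.transpose * etaM * (M * N)
      = N.transpose * (M.transpose * etaM * M) * N by noncomm_ring, h2, g2]
  · rw [Matrix.det_mul, h3, g3, one_mul]
  · intro v hv
    exact g4 v (h4 _ (by rw [← mvC_comp]; exact hv))
  · intro α k w hα hw
    rw [← Matrix.mulVec_mulVec, mvC_comp]
    exact h5 α _ _ hα (g5 α k w hα hw)

def rotZ (c s : ℝ) : M4' := !![1,0,0,0; 0,c,-s,0; 0,s,c,0; 0,0,0,1]
def rotY (c s : ℝ) : M4' := !![1,0,0,0; 0,c,0,-s; 0,0,1,0; 0,s,0,c]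
def flipM : M4' := !![1,0,0,0; 0,1,0,0; 0,0,-1,0; 0,0,0,-1]
def boostM (ch sh : ℝ) : M4' := !![ch,0,0,-sh; 0,1,0,0; 0,0,1,0; -sh,0,0,ch]

lemma rotZ_mulVec (c s : ℝ) (k : Fin 4 → ℝ) :
    (rotZ c s).mulVec k = ![k 0, c * k 1 - s * k 2, s * k 1 + c * k 2, k 3] := by
  funext i; fin_cases i <;>
    simp [rotZ, Matrix.mulVec, dotProduct, Fin.sum_univ_four] <;> ring

lemma rotZ_mvC (c s : ℝ) (w : Fin 4 → ℂ) :
    mvC (rotZ c s) w = ![w 0, (c:ℂ) * w 1 - (s:ℂ) * w 2, (s:ℂ) * w 1 + (c:ℂ) * w 2, w 3] := by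
  funext i; fin_cases i <;>
    simp [rotZ, mvC, Fin.sum_univ_four] <;> push_cast <;> ring

lemma rotY_mulVec (c s : ℝ) (k : Fin 4 → ℝ) :
    (rotY c s).mulVec k = ![k 0, c * k 1 - s * k 3, k 2, s * k 1 + c * k 3] := by
  funext i; fin_cases i <;>
    simp [rotY, Matrix.mulVec, dotProduct, Fin.sum_univ_four] <;> ring

lemma rotY_mvC (c s : ℝ) (w : Fin 4 → ℂ) :
    mvC (rotY c s) w = ![w 0, (c:ℂ) * w 1 - (s:ℂ) * w 3, w 2, (s:ℂ) * w 1 + (c:ℂ) * w 3] := by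
  funext i; fin_cases i <;>
    simp [rotY, mvC, Fin.sum_univ_four] <;> push_cast <;> ring

lemma flipM_mulVec (k : Fin 4 → ℝ) :
    flipM.mulVec k = ![k 0, k 1, -k 2, -k 3] := by
  funext i; fin_cases i <;>
    simp [flipM, Matrix.mulVec, dotProduct, Fin.sum_univ_four]

lemma flipM_mvC (w : Fin 4 → ℂ) :
    mvC flipM w = ![w 0, w 1, -w 2, -w 3] := by
  funext i; fin_cases i <;>
    simp [flipM, mvC, Fin.sum_univ_four]

lemma boostM_mulVec (ch sh : ℝ) (k : Fin 4 → ℝ) :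
    (boostM ch sh).mulVec k = ![ch * k 0 - sh * k 3, k 1, k 2, ch * k 3 - sh * k 0] := by
  funext i; fin_cases i <;>
    simp [boostM, Matrix.mulVec, dotProduct, Fin.sum_univ_four] <;> ring

lemma boostM_mvC (ch sh : ℝ) (w : Fin 4 → ℂ) :
    mvC (boostM ch sh) w = ![(ch:ℂ) * w 0 - (sh:ℂ) * w 3, w 1, w 2, (ch:ℂ) * w 3 - (sh:ℂ) * w 0] := by
  funext i; fin_cases i <;>
    simp [boostM, mvC, Fin.sum_univ_four] <;> push_cast <;> ring

lemma good_rotZ (c s : ℝ) (h : c^2 + s^2 = 1) : Good (rotZ c s) := by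
  have hC : (c:ℂ)^2 + (s:ℂ)^2 = 1 := by exact_mod_cast h
  refine ⟨?_, ?_, ?_, ?_, ?_⟩
  · ext i j
    fin_cases i <;> fin_cases j <;>
      (simp only [Matrix.mul_apply, Fin.sum_univ_four]
       simp (config := { decide := true }) [rotZ, etaM, gR, Matrix.transpose_apply,
         Matrix.vecHead, Matrix.vecTail]) <;> linarith [h]
  · ext i j
    fin_cases i <;> fin_cases j <;>
      (simp only [Matrix.mul_apply, Fin.sum_univ_four]
       simp (config := { decide := true }) [rotZ, etaM, gR, Matrix.transpose_apply,
         Matrix.vecHead, Matrix.vecTail]) <;> linarith [h]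
  · simp [rotZ, Matrix.det_succ_row_zero, Fin.sum_univ_succ]
    linear_combination h
  · intro v hv
    have e0 := congr_fun hv 0
    have e1 := congr_fun hv 1
    have e2 := congr_fun hv 2
    have e3 := congr_fun hv 3
    rw [rotZ_mvC] at e0 e1 e2 e3
    simp at e0 e1 e2 e3
    funext μ; fin_cases μ <;> simp
    · exact e0
    · linear_combination (c:ℂ) * e1 + (s:ℂ) * e2 - v 1 * hC + v 1
    · linear_combination -(s:ℂ) * e1 + (c:ℂ) * e2 - v 2 * hC + v 2
    · exact e3
  · rintro α k w hα2 ⟨E1, E2, E3⟩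
    rw [rotZ_mulVec, rotZ_mvC]
    refine ⟨?_, ?_, ?_⟩ <;> simp <;> push_cast
    · linear_combination (c:ℂ) * E1 - (s:ℂ) * E2
    · linear_combination (s:ℂ) * E1 + (c:ℂ) * E2
    · linear_combination (hC - 1) * ((k 1 :ℂ) * w 2 - (k 2:ℂ) * w 1) + E3

lemma good_rotY (c s : ℝ) (h : c^2 + s^2 = 1) : Good (rotY c s) := by
  have hC : (c:ℂ)^2 + (s:ℂ)^2 = 1 := by exact_mod_cast h
  refine ⟨?_, ?_, ?_, ?_, ?_⟩
  · ext i j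
    fin_cases i <;> fin_cases j <;>
      (simp only [Matrix.mul_apply, Fin.sum_univ_four]
       simp (config := { decide := true }) [rotY, etaM, gR, Matrix.transpose_apply,
         Matrix.vecHead, Matrix.vecTail]) <;> linarith [h]
  · ext i j
    fin_cases i <;> fin_cases j <;>
      (simp only [Matrix.mul_apply, Fin.sum_univ_four]
       simp (config := { decide := true }) [rotY, etaM, gR, Matrix.transpose_apply,
         Matrix.vecHead, Matrix.vecTail]) <;> linarith [h]
  · simp [rotY, Matrix.det_succ_row_zero, Fin.sum_univ_succ]
    linear_combination h
  · intro v hv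
    have e0 := congr_fun hv 0
    have e1 := congr_fun hv 1
    have e2 := congr_fun hv 2
    have e3 := congr_fun hv 3
    rw [rotY_mvC] at e0 e1 e2 e3
    simp at e0 e1 e2 e3
    funext μ; fin_cases μ <;> simp
    · exact e0
    · linear_combination (c:ℂ) * e1 + (s:ℂ) * e3 - v 1 * hC + v 1
    · exact e2
    · linear_combination -(s:ℂ) * e1 + (c:ℂ) * e3 - v 3 * hC + v 3
  · rintro α k w hα2 ⟨E1, E2, E3⟩
    rw [rotY_mulVec, rotY_mvC]
    refine ⟨?_, ?_, ?_⟩ <;> simp <;> push_cast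
    · linear_combination (c:ℂ) * E1 - (s:ℂ) * E3
    · linear_combination (hC - 1) * ((k 3 :ℂ) * w 1 - (k 1:ℂ) * w 3) + E2
    · linear_combination (s:ℂ) * E1 + (c:ℂ) * E3

lemma good_flip : Good flipM := by
  refine ⟨?_, ?_, ?_, ?_, ?_⟩
  · ext i j
    fin_cases i <;> fin_cases j <;>
      (simp only [Matrix.mul_apply, Fin.sum_univ_four]
       simp (config := { decide := true }) [flipM, etaM, gR, Matrix.transpose_apply,
         Matrix.vecHead, Matrix.vecTail])
  · ext i j
    fin_cases i <;> fin_cases j <;>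
      (simp only [Matrix.mul_apply, Fin.sum_univ_four]
       simp (config := { decide := true }) [flipM, etaM, gR, Matrix.transpose_apply,
         Matrix.vecHead, Matrix.vecTail])
  · simp [flipM, Matrix.det_succ_row_zero, Fin.sum_univ_succ]
  · intro v hv
    have e0 := congr_fun hv 0
    have e1 := congr_fun hv 1
    have e2 := congr_fun hv 2
    have e3 := congr_fun hv 3
    rw [flipM_mvC] at e0 e1 e2 e3
    simp at e0 e1 e2 e3
    funext μ; fin_cases μ <;> simpa
  · rintro α k w hα2 ⟨E1, E2, E3⟩
    rw [flipM_mulVec, flipM_mvC]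
    refine ⟨?_, ?_, ?_⟩ <;> simp <;> push_cast
    · linear_combination E1
    · linear_combination -E2
    · linear_combination -E3

lemma good_boost (ch sh : ℝ) (h : ch^2 - sh^2 = 1) : Good (boostM ch sh) := by
  have hC : (ch:ℂ)^2 - (sh:ℂ)^2 = 1 := by exact_mod_cast h
  refine ⟨?_, ?_, ?_, ?_, ?_⟩
  · ext i j
    fin_cases i <;> fin_cases j <;>
      (simp only [Matrix.mul_apply, Fin.sum_univ_four]
       simp (config := { decide := true }) [boostM, etaM, gR, Matrix.transpose_apply,
         Matrix.vecHead, Matrix.vecTail]) <;> linarith [h]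
  · ext i j
    fin_cases i <;> fin_cases j <;>
      (simp only [Matrix.mul_apply, Fin.sum_univ_four]
       simp (config := { decide := true }) [boostM, etaM, gR, Matrix.transpose_apply,
         Matrix.vecHead, Matrix.vecTail]) <;> linarith [h]
  · simp (config := { decide := true }) [boostM, Matrix.det_succ_row_zero, Fin.sum_univ_succ,
      Matrix.vecHead, Matrix.vecTail]
    rw [show (![0,0,1,0] : Fin 4 → ℝ) (Fin.succAbove 3 2) = 1 from rfl]
    linear_combination h
  · intro v hv
    have e0 := congr_fun hv 0
    have e1 := congr_fun hv 1
    have e2 := congr_fun hv 2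
    have e3 := congr_fun hv 3
    rw [boostM_mvC] at e0 e1 e2 e3
    simp at e0 e1 e2 e3
    funext μ; fin_cases μ <;> simp
    · linear_combination (ch:ℂ) * e0 + (sh:ℂ) * e3 - v 0 * hC + v 0
    · exact e1
    · exact e2
    · linear_combination (sh:ℂ) * e0 + (ch:ℂ) * e3 - v 3 * hC + v 3
  · rintro α k w hα2 ⟨E1, E2, E3⟩
    have hα2C : ((α:ℂ))^2 = 1 := by exact_mod_cast hα2
    rw [boostM_mulVec, boostM_mvC]
    refine ⟨?_, ?_, ?_⟩ <;> simp <;> push_cast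
    · linear_combination (ch:ℂ) * E1 + (sh:ℂ) * (α:ℂ) * Complex.I * E2 -
        (sh:ℂ) * ((k 2:ℂ) * w 0 - (k 0:ℂ) * w 2) * Complex.I^2 * hα2C -
        (sh:ℂ) * ((k 2:ℂ) * w 0 - (k 0:ℂ) * w 2) * Complex.I_sq
    · linear_combination (ch:ℂ) * E2 - (sh:ℂ) * (α:ℂ) * Complex.I * E1 -
        (sh:ℂ) * ((k 0:ℂ) * w 1 - (k 1:ℂ) * w 0) * Complex.I^2 * hα2C -
        (sh:ℂ) * ((k 0:ℂ) * w 1 - (k 1:ℂ) * w 0) * Complex.I_sq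
    · linear_combination E3 - (α:ℂ) * Complex.I * ((k 0:ℂ) * w 3 - (k 3:ℂ) * w 0) * hC

lemma hodge01 (L : Fin 4 → Fin 4 → ℂ) : hodge L 0 1 = (1/2) * (L 2 3 - L 3 2) := by
  simp (config := { decide := true }) [hodge, Fin.sum_univ_four, gR, eps, fv0, fv1, fv2, fv3]
  ring

lemma hodge02 (L : Fin 4 → Fin 4 → ℂ) : hodge L 0 2 = (1/2) * (L 3 1 - L 1 3) := by
  simp (config := { decide := true }) [hodge, Fin.sum_univ_four, gR, eps, fv0, fv1, fv2, fv3]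
  ring

lemma hodge03 (L : Fin 4 → Fin 4 → ℂ) : hodge L 0 3 = (1/2) * (L 1 2 - L 2 1) := by
  simp (config := { decide := true }) [hodge, Fin.sum_univ_four, gR, eps, fv0, fv1, fv2, fv3]
  ring

lemma fin4_cases (P : Fin 4 → Prop) (h0 : P 0) (h1 : P 1) (h2 : P 2) (h3 : P 3) : ∀ i, P i := by
  intro i; fin_cases i <;> assumption

/-! ### Derivatives of plane waves -/

lemma pd_plane (c : ℂ) (k : Fin 4 → ℝ) (μ : Fin 4) (x : Fin 4 → ℝ) :
    pd μ (fun y => c * Complex.exp (-Complex.I * ∑ ρ : Fin 4, ((k ρ : ℂ) * (y ρ : ℂ)))) x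
    = c * (-Complex.I * (k μ : ℂ)) *
        Complex.exp (-Complex.I * ∑ ρ : Fin 4, ((k ρ : ℂ) * (x ρ : ℂ))) := by
  set LL : (Fin 4 → ℝ) →L[ℝ] ℂ :=
    ∑ ρ : Fin 4, ((-Complex.I * (k ρ : ℂ)) • (Complex.ofRealCLM.comp (ContinuousLinearMap.proj ρ))) with hLL
  have hlin : ∀ y : Fin 4 → ℝ,
      LL y = -Complex.I * ∑ ρ : Fin 4, ((k ρ : ℂ) * (y ρ : ℂ)) := by
    intro y
    simp [hLL, ContinuousLinearMap.sum_apply, Finset.mul_sum]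
    exact Finset.sum_congr rfl (fun i _ => by ring)
  have hfd : HasFDerivAt (fun y : Fin 4 → ℝ => -Complex.I * ∑ ρ : Fin 4, ((k ρ : ℂ) * (y ρ : ℂ))) LL x := by
    have := LL.hasFDerivAt (x := x)
    convert this using 1
    funext y
    rw [hlin]
  have h2 : HasFDerivAt
      (fun y : Fin 4 → ℝ => c * Complex.exp (-Complex.I * ∑ ρ : Fin 4, ((k ρ : ℂ) * (y ρ : ℂ))))
      (c • ((Complex.exp (-Complex.I * ∑ ρ : Fin 4, ((k ρ : ℂ) * (x ρ : ℂ)))) • LL)) x :=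
    (hfd.cexp).const_smul c
  have := h2.fderiv
  rw [pd, this]
  simp [hlin, Pi.single_apply, apply_ite Complex.ofReal, mul_ite, mul_one, mul_zero,
    Finset.sum_ite_eq']
  ring

lemma dEx_plane (w : Fin 4 → ℂ) (k : Fin 4 → ℝ) (x : Fin 4 → ℝ) (μ ν : Fin 4) :
    dEx (fun y ρ => w ρ * Complex.exp (-Complex.I * ∑ σ : Fin 4, ((k σ : ℂ) * (y σ : ℂ)))) x μ ν
    = -Complex.I * ((k μ : ℂ) * w ν - (k ν : ℂ) * w μ) *
        Complex.exp (-Complex.I * ∑ σ : Fin 4, ((k σ : ℂ) * (x σ : ℂ))) := by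
  rw [dEx, pd_plane, pd_plane]
  ring

/-! ### The main theorem -/

/-- every non-trivial plane wave solution of the polarized Maxwell equation
`*du = α i du` is, up to a proper orthochronous Lorentz transformation, of the canonical form
with `w = C(0,1,−αi,0)` and `k = β(1,0,0,1)`: there are a Lorentz matrix `Λ` (`ΛᵀηΛ = η`,
`det Λ = 1`, `Λ⁰₀ ≥ 1`), `C > 0` and `β = ±1` with
`Λ^κ_μ Λ^λ_ν (du)_{κλ}(Λx) = (du₀)_{μν}(x)` for all `x`. -/
theorem plane_wave_canonical_form (α : ℝ) (hα : α = 1 ∨ α = -1)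
    (w : Fin 4 → ℂ) (k : Fin 4 → ℝ) (hk : k ≠ 0)
    (u : (Fin 4 → ℝ) → Fin 4 → ℂ)
    (hu : ∀ x μ, u x μ = w μ * Complex.exp (-Complex.I * ∑ ρ : Fin 4, ((k ρ : ℂ) * (x ρ : ℂ))))
    (hnt : ¬ (∀ x μ ν, dEx u x μ ν = 0))
    (hpol : ∀ x μ ν, hodge (dEx u x) μ ν = (α : ℂ) * Complex.I * dEx u x μ ν) :
    ∃ (Λ : Matrix (Fin 4) (Fin 4) ℝ) (C β : ℝ),
      (Λ.transpose * (Matrix.of fun μ ν => gR μ ν) * Λ = Matrix.of fun μ ν => gR μ ν) ∧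
      Λ.det = 1 ∧ 1 ≤ Λ 0 0 ∧ 0 < C ∧ (β = 1 ∨ β = -1) ∧
      ∀ x μ ν, ∑ κ : Fin 4, ∑ lam : Fin 4,
          ((Λ κ μ : ℝ) : ℂ) * ((Λ lam ν : ℝ) : ℂ) *
            dEx u (fun ρ => ∑ σ : Fin 4, Λ ρ σ * x σ) κ lam
        = dEx (canonicalWave C α β) x μ ν := by
  have hα2 : α ^ 2 = 1 := by rcases hα with h | h <;> rw [h] <;> norm_num
  have hα2C : ((α:ℂ))^2 = 1 := by exact_mod_cast hα2
  have huf : u = fun y ρ => w ρ * Complex.exp (-Complex.I * ∑ σ : Fin 4, ((k σ : ℂ) * (y σ : ℂ))) :=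
    funext fun x => funext fun μ => hu x μ
  subst huf
  have hdEx : ∀ (x : Fin 4 → ℝ) (μ ν : Fin 4),
      dEx (fun y ρ => w ρ * Complex.exp (-Complex.I * ∑ σ : Fin 4, ((k σ : ℂ) * (y σ : ℂ)))) x μ ν
      = -Complex.I * ((k μ : ℂ) * w ν - (k ν : ℂ) * w μ) *
          Complex.exp (-Complex.I * ∑ σ : Fin 4, ((k σ : ℂ) * (x σ : ℂ))) :=
    fun x μ ν => dEx_plane w k x μ ν
  -- extract the polarization equations
  have hE : Etriple α k w := by
    have H1 := hpol 0 0 1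
    have H2 := hpol 0 0 2
    have H3 := hpol 0 0 3
    rw [hodge01] at H1
    rw [hodge02] at H2
    rw [hodge03] at H3
    simp only [hdEx] at H1 H2 H3
    simp only [Pi.zero_apply, Complex.ofReal_zero, mul_zero, Finset.sum_const_zero,
      neg_zero, Complex.exp_zero, mul_one] at H1 H2 H3
    refine ⟨?_, ?_, ?_⟩
    · linear_combination Complex.I * H1 + ((k 2:ℂ) * w 3 - (k 3:ℂ) * w 2 -
        (α:ℂ) * Complex.I * ((k 0:ℂ) * w 1 - (k 1:ℂ) * w 0)) * Complex.I_sq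
    · linear_combination Complex.I * H2 + ((k 3:ℂ) * w 1 - (k 1:ℂ) * w 3 -
        (α:ℂ) * Complex.I * ((k 0:ℂ) * w 2 - (k 2:ℂ) * w 0)) * Complex.I_sq
    · linear_combination Complex.I * H3 + ((k 1:ℂ) * w 2 - (k 2:ℂ) * w 1 -
        (α:ℂ) * Complex.I * ((k 0:ℂ) * w 3 - (k 3:ℂ) * w 0)) * Complex.I_sq
  obtain ⟨E1, E2, E3⟩ := hE
  -- w is not a complex multiple of k
  have hnm : ∀ lam : ℂ, ∃ μ, w μ ≠ lam * (k μ : ℂ) := by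
    intro lam
    by_contra hc
    push_neg at hc
    apply hnt
    intro x μ ν
    rw [hdEx, hc μ, hc ν]
    ring
  -- k is a null vector
  have hex : ∃ ρ, k ρ ≠ 0 := by
    by_contra hc; push_neg at hc; exact hk (funext hc)
  have hnull : k 0 ^ 2 = k 1 ^ 2 + k 2 ^ 2 + k 3 ^ 2 := by
    by_contra hne
    have hD : ((k 1:ℂ)^2 + (k 2:ℂ)^2 + (k 3:ℂ)^2 - (k 0:ℂ)^2) ≠ 0 := by
      intro h0
      apply hne
      have : ((k 0 ^ 2 : ℝ) : ℂ) = ((k 1 ^ 2 + k 2 ^ 2 + k 3 ^ 2 : ℝ) : ℂ) := by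
        push_cast; linear_combination -h0
      exact_mod_cast this
    set D : ℂ := (k 1:ℂ)^2 + (k 2:ℂ)^2 + (k 3:ℂ)^2 - (k 0:ℂ)^2 with hDdef
    set lam : ℂ := ((k 1:ℂ) * w 1 + (k 2:ℂ) * w 2 + (k 3:ℂ) * w 3 - (k 0:ℂ) * w 0) / D with hlam
    have key1 : ((k 1:ℂ) * w 1 + (k 2:ℂ) * w 2 + (k 3:ℂ) * w 3 - (k 0:ℂ) * w 0) * (k 1:ℂ)
        = D * w 1 := by
      rw [hDdef]
      linear_combination (k 2:ℂ) * E3 - (k 3:ℂ) * E2 + (α:ℂ) * Complex.I * (k 0:ℂ) * E1 +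
        ((k 0:ℂ)^2 * w 1 - (k 0:ℂ) * (k 1:ℂ) * w 0) * Complex.I^2 * hα2C +
        ((k 0:ℂ)^2 * w 1 - (k 0:ℂ) * (k 1:ℂ) * w 0) * Complex.I_sq
    have key2 : ((k 1:ℂ) * w 1 + (k 2:ℂ) * w 2 + (k 3:ℂ) * w 3 - (k 0:ℂ) * w 0) * (k 2:ℂ)
        = D * w 2 := by
      rw [hDdef]
      linear_combination (k 3:ℂ) * E1 - (k 1:ℂ) * E3 + (α:ℂ) * Complex.I * (k 0:ℂ) * E2 +
        ((k 0:ℂ)^2 * w 2 - (k 0:ℂ) * (k 2:ℂ) * w 0) * Complex.I^2 * hα2C +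
        ((k 0:ℂ)^2 * w 2 - (k 0:ℂ) * (k 2:ℂ) * w 0) * Complex.I_sq
    have key3 : ((k 1:ℂ) * w 1 + (k 2:ℂ) * w 2 + (k 3:ℂ) * w 3 - (k 0:ℂ) * w 0) * (k 3:ℂ)
        = D * w 3 := by
      rw [hDdef]
      linear_combination (k 1:ℂ) * E2 - (k 2:ℂ) * E1 + (α:ℂ) * Complex.I * (k 0:ℂ) * E3 +
        ((k 0:ℂ)^2 * w 3 - (k 0:ℂ) * (k 3:ℂ) * w 0) * Complex.I^2 * hα2C +
        ((k 0:ℂ)^2 * w 3 - (k 0:ℂ) * (k 3:ℂ) * w 0) * Complex.I_sq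
    have h1 : w 1 = lam * (k 1:ℂ) := by
      rw [hlam, div_mul_eq_mul_div, eq_div_iff hD]
      linear_combination -key1
    have h2 : w 2 = lam * (k 2:ℂ) := by
      rw [hlam, div_mul_eq_mul_div, eq_div_iff hD]
      linear_combination -key2
    have h3 : w 3 = lam * (k 3:ℂ) := by
      rw [hlam, div_mul_eq_mul_div, eq_div_iff hD]
      linear_combination -key3
    have hαI : (α:ℂ) * Complex.I ≠ 0 := by
      apply mul_ne_zero
      · simpa using fun h => by rcases hα with h' | h' <;> rw [h'] at h <;> norm_num at h
      · exact Complex.I_ne_zero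
    by_cases hsp : k 1 = 0 ∧ k 2 = 0 ∧ k 3 = 0
    · obtain ⟨ha, hb, hc⟩ := hsp
      have hk0 : k 0 ≠ 0 := by
        intro h0
        apply hk
        funext i
        exact fin4_cases (fun i => k i = 0) h0 ha hb hc i
      have haC : ((k 1:ℝ):ℂ) = 0 := by rw [ha]; simp
      have hbC : ((k 2:ℝ):ℂ) = 0 := by rw [hb]; simp
      have hcC : ((k 3:ℝ):ℂ) = 0 := by rw [hc]; simp
      have hk0C : ((k 0:ℝ):ℂ) ≠ 0 := Complex.ofReal_ne_zero.mpr hk0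
      have solveW : ∀ (z : ℂ), (α:ℂ) * Complex.I * ((k 0:ℂ) * z) = 0 → z = 0 := by
        intro z hz
        rcases mul_eq_zero.mp hz with h | h
        · exact absurd h hαI
        · exact (mul_eq_zero.mp h).resolve_left hk0C
      have hw1 : w 1 = 0 := by
        apply solveW
        linear_combination -E1 + w 3 * hbC - w 2 * hcC + (α:ℂ) * Complex.I * w 0 * haC
      have hw2 : w 2 = 0 := by
        apply solveW
        linear_combination -E2 + w 1 * hcC - w 3 * haC + (α:ℂ) * Complex.I * w 0 * hbC
      have hw3 : w 3 = 0 := by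
        apply solveW
        linear_combination -E3 + w 2 * haC - w 1 * hbC + (α:ℂ) * Complex.I * w 0 * hcC
      obtain ⟨μ, hμ⟩ := hnm (w 0 / (k 0:ℂ))
      apply hμ
      refine fin4_cases (fun μ => w μ = w 0 / (k 0:ℂ) * (k μ:ℂ)) ?_ ?_ ?_ ?_ μ
      · show w 0 = w 0 / ((k 0:ℝ):ℂ) * ((k 0:ℝ):ℂ)
        field_simp
      · show w 1 = w 0 / ((k 0:ℝ):ℂ) * ((k 1:ℝ):ℂ)
        rw [hw1, haC]; simp
      · show w 2 = w 0 / ((k 0:ℝ):ℂ) * ((k 2:ℝ):ℂ)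
        rw [hw2, hbC]; simp
      · show w 3 = w 0 / ((k 0:ℝ):ℂ) * ((k 3:ℝ):ℂ)
        rw [hw3, hcC]; simp
    · -- some spatial component nonzero; get w 0 = lam * k 0
      have hw0 : w 0 = lam * (k 0:ℂ) := by
        have d1 : (k 0:ℂ) * w 1 - (k 1:ℂ) * w 0 = 0 := by
          have hE1' := E1
          rw [h2, h3] at hE1'
          have h' : (α:ℂ) * Complex.I * ((k 0:ℂ) * w 1 - (k 1:ℂ) * w 0) = 0 := by
            linear_combination -hE1'
          exact (mul_eq_zero.mp h').resolve_left hαI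
        have d2 : (k 0:ℂ) * w 2 - (k 2:ℂ) * w 0 = 0 := by
          have hE2' := E2
          rw [h1, h3] at hE2'
          have h' : (α:ℂ) * Complex.I * ((k 0:ℂ) * w 2 - (k 2:ℂ) * w 0) = 0 := by
            linear_combination -hE2'
          exact (mul_eq_zero.mp h').resolve_left hαI
        have d3 : (k 0:ℂ) * w 3 - (k 3:ℂ) * w 0 = 0 := by
          have hE3' := E3
          rw [h1, h2] at hE3'
          have h' : (α:ℂ) * Complex.I * ((k 0:ℂ) * w 3 - (k 3:ℂ) * w 0) = 0 := by
            linear_combination -hE3'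
          exact (mul_eq_zero.mp h').resolve_left hαI
        have c1 : (k 1:ℂ) * (w 0 - lam * (k 0:ℂ)) = 0 := by
          linear_combination -d1 + (k 0:ℂ) * h1
        have c2 : (k 2:ℂ) * (w 0 - lam * (k 0:ℂ)) = 0 := by
          linear_combination -d2 + (k 0:ℂ) * h2
        have c3 : (k 3:ℂ) * (w 0 - lam * (k 0:ℂ)) = 0 := by
          linear_combination -d3 + (k 0:ℂ) * h3
        have hne' : k 1 ≠ 0 ∨ k 2 ≠ 0 ∨ k 3 ≠ 0 := by
          by_contra hcc; push_neg at hcc; exact hsp ⟨hcc.1, hcc.2.1, hcc.2.2⟩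
        rcases hne' with h | h | h
        · have := (mul_eq_zero.mp c1).resolve_left (Complex.ofReal_ne_zero.mpr h)
          linear_combination this
        · have := (mul_eq_zero.mp c2).resolve_left (Complex.ofReal_ne_zero.mpr h)
          linear_combination this
        · have := (mul_eq_zero.mp c3).resolve_left (Complex.ofReal_ne_zero.mpr h)
          linear_combination this
      obtain ⟨μ, hμ⟩ := hnm lam
      apply hμ
      exact fin4_cases (fun μ => w μ = lam * (k μ:ℂ)) hw0 h1 h2 h3 μ
  -- ============ construction stage ============
  set β : ℝ := if 0 < k 0 then 1 else -1 with hβdef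
  have hβ : β = 1 ∨ β = -1 := by rw [hβdef]; split_ifs <;> simp
  have hβ2 : β^2 = 1 := by rcases hβ with h|h <;> rw [h] <;> norm_num
  have hk0 : k 0 ≠ 0 := by
    intro h0
    have e1 : k 1 = 0 := by nlinarith [sq_nonneg (k 1), sq_nonneg (k 2), sq_nonneg (k 3)]
    have e2 : k 2 = 0 := by nlinarith [sq_nonneg (k 1), sq_nonneg (k 2), sq_nonneg (k 3)]
    have e3 : k 3 = 0 := by nlinarith [sq_nonneg (k 1), sq_nonneg (k 2), sq_nonneg (k 3)]
    exact hk (funext (fin4_cases (fun i => k i = 0) h0 e1 e2 e3))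
  have hαI : (α:ℂ) * Complex.I ≠ 0 := by
    apply mul_ne_zero
    · simpa using fun h => by rcases hα with h' | h' <;> rw [h'] at h <;> norm_num at h
    · exact Complex.I_ne_zero
  set m : Fin 4 → ℝ := fun ρ => β * k ρ with hmdef
  have hm0 : 0 < m 0 := by
    simp only [hmdef]
    rw [hβdef]
    split_ifs with h
    · linarith
    · have : k 0 < 0 := lt_of_le_of_ne (not_lt.mp h) hk0
      nlinarith
  have hm0' : m 0 ≠ 0 := ne_of_gt hm0
  have hmnull : m 0^2 = m 1^2 + m 2^2 + m 3^2 := by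
    simp only [hmdef]
    linear_combination β^2 * hnull
  have hmE : Etriple α m w := by
    refine ⟨?_, ?_, ?_⟩ <;> simp only [hmdef] <;> push_cast
    · linear_combination (β:ℂ) * E1
    · linear_combination (β:ℂ) * E2
    · linear_combination (β:ℂ) * E3
  have hmnm : ∀ lam : ℂ, ∃ μ, w μ ≠ lam * ((m μ:ℝ):ℂ) := by
    intro lam
    obtain ⟨μ, hμ⟩ := hnm (lam * (β:ℂ))
    refine ⟨μ, fun hh => hμ ?_⟩
    rw [hh]
    simp only [hmdef]
    push_cast
    ring
  -- Stage 1: rotate the spatial part of m to the z-axis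
  obtain ⟨A1, hA1g, hA1m, hA100, hA130⟩ :
      ∃ A, Good A ∧ A.mulVec m = ![m 0, 0, 0, m 0] ∧ A 0 0 = 1 ∧ A 3 0 = 0 := by
    by_cases hsp : m 1^2 + m 2^2 = 0
    · have hm1 : m 1 = 0 := by nlinarith [sq_nonneg (m 1), sq_nonneg (m 2)]
      have hm2 : m 2 = 0 := by nlinarith [sq_nonneg (m 1), sq_nonneg (m 2)]
      have hm3sq : (m 3 - m 0) * (m 3 + m 0) = 0 := by
        linear_combination -hmnull - m 1 * hm1 - m 2 * hm2
      rcases mul_eq_zero.mp hm3sq with h | h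
      · refine ⟨rotZ 1 0, good_rotZ 1 0 (by norm_num), ?_, by simp [rotZ, Matrix.vecHead, Matrix.vecTail], by simp [rotZ, Matrix.vecHead, Matrix.vecTail]⟩
        rw [rotZ_mulVec]
        funext i
        fin_cases i <;> simp [hm1, hm2] <;> linarith
      · refine ⟨flipM, good_flip, ?_, by simp [flipM, Matrix.vecHead, Matrix.vecTail], by simp [flipM, Matrix.vecHead, Matrix.vecTail]⟩
        rw [flipM_mulVec]
        funext i
        fin_cases i <;> simp [hm1, hm2] <;> linarith
    · have hsp' : 0 < m 1^2 + m 2^2 :=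
        lt_of_le_of_ne (by positivity) (Ne.symm hsp)
      set r : ℝ := Real.sqrt (m 1^2 + m 2^2) with hrdef
      have hr : 0 < r := Real.sqrt_pos.mpr hsp'
      have hr' : r ≠ 0 := ne_of_gt hr
      have hrsq : r^2 = m 1^2 + m 2^2 := Real.sq_sqrt (le_of_lt hsp')
      refine ⟨rotY (m 3/m 0) (r/m 0) * rotZ (m 1/r) (-(m 2/r)),
        good_mul (good_rotY _ _ ?_) (good_rotZ _ _ ?_), ?_, ?_, ?_⟩
      · field_simp
        linear_combination hrsq - hmnull
      · field_simp
        linear_combination -hrsq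
      · rw [← Matrix.mulVec_mulVec, rotZ_mulVec, rotY_mulVec]
        funext i
        refine fin4_cases (fun i =>
          (![(![m 0, m 1/r * m 1 - -(m 2/r) * m 2, -(m 2/r) * m 1 + m 1/r * m 2, m 3]) 0,
             m 3/m 0 * (![m 0, m 1/r * m 1 - -(m 2/r) * m 2, -(m 2/r) * m 1 + m 1/r * m 2, m 3]) 1
               - r/m 0 * (![m 0, m 1/r * m 1 - -(m 2/r) * m 2, -(m 2/r) * m 1 + m 1/r * m 2, m 3]) 3,
             (![m 0, m 1/r * m 1 - -(m 2/r) * m 2, -(m 2/r) * m 1 + m 1/r * m 2, m 3]) 2,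
             r/m 0 * (![m 0, m 1/r * m 1 - -(m 2/r) * m 2, -(m 2/r) * m 1 + m 1/r * m 2, m 3]) 1
               + m 3/m 0 * (![m 0, m 1/r * m 1 - -(m 2/r) * m 2, -(m 2/r) * m 1 + m 1/r * m 2, m 3]) 3]) i
          = (![m 0, 0, 0, m 0]) i) ?_ ?_ ?_ ?_ i
        · norm_num
        · norm_num [Matrix.cons_val_three, Matrix.cons_val_two, Matrix.vecHead, Matrix.vecTail]
          field_simp
          linear_combination -(m 3) * hrsq
        · norm_num [Matrix.cons_val_three, Matrix.cons_val_two, Matrix.vecHead, Matrix.vecTail]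
          field_simp
          ring
        · norm_num [Matrix.cons_val_three, Matrix.cons_val_two, Matrix.vecHead, Matrix.vecTail]
          field_simp
          linear_combination -(β^2) * hnull
      · simp [Matrix.mul_apply, Fin.sum_univ_four, rotY, rotZ, Matrix.vecHead, Matrix.vecTail]
      · simp [Matrix.mul_apply, Fin.sum_univ_four, rotY, rotZ, Matrix.vecHead, Matrix.vecTail]
  -- Stage 2: boost to normalize
  set ch : ℝ := (m 0 + 1/m 0)/2 with hchdef
  set sh : ℝ := (m 0 - 1/m 0)/2 with hshdef
  have hch : ch^2 - sh^2 = 1 := by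
    rw [hchdef, hshdef]
    field_simp
    ring
  set B : M4' := boostM ch sh * A1 with hBdef
  have hBg : Good B := good_mul (good_boost ch sh hch) hA1g
  have hBm : B.mulVec m = ![1,0,0,1] := by
    rw [hBdef, ← Matrix.mulVec_mulVec, hA1m, boostM_mulVec]
    funext i
    fin_cases i <;> simp [hchdef, hshdef] <;> field_simp <;> ring
  set wt : Fin 4 → ℂ := mvC B w with hwtdef
  have hEB := hBg.2.2.2.2 α m w hα2 hmE
  rw [hBm, ← hwtdef] at hEB
  obtain ⟨F1, F2, F3⟩ := hEB
  norm_num [Matrix.cons_val_three, Matrix.cons_val_two, Matrix.vecHead, Matrix.vecTail] at F1 F2 F3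
  have hwt2 : wt 2 = -(α:ℂ) * Complex.I * wt 1 := by linear_combination -F1
  have hwt3 : wt 3 = wt 0 := by
    rcases F3 with h | h
    · exfalso; rw [h] at hα2; norm_num at hα2
    · linear_combination h
  have hwt1 : wt 1 ≠ 0 := by
    intro h0
    have hwt2' : wt 2 = 0 := by rw [hwt2, h0]; ring
    have hv : mvC B (fun μ => w μ - wt 0 * ((m μ:ℝ):ℂ)) = 0 := by
      funext μ
      have expand : mvC B (fun μ => w μ - wt 0 * ((m μ:ℝ):ℂ)) μ
          = wt μ - wt 0 * (((B.mulVec m) μ:ℝ):ℂ) := by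
        simp only [hwtdef, mvC, Matrix.mulVec, dotProduct, Fin.sum_univ_four]
        push_cast
        ring
      rw [expand, hBm]
      refine fin4_cases (fun μ => wt μ - wt 0 * (((![1,0,0,1] : Fin 4 → ℝ) μ:ℝ):ℂ) = (0 : Fin 4 → ℂ) μ)
        ?_ ?_ ?_ ?_ μ
      · simp
      · simpa using h0
      · simpa using hwt2'
      · simp
        linear_combination hwt3
    have hz := hBg.2.2.2.1 _ hv
    obtain ⟨μ, hμ⟩ := hmnm (wt 0)
    apply hμ
    have := congr_fun hz μ
    simp at this
    linear_combination this
  -- Stage 3: phase rotation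
  set C : ℝ := ‖wt 1‖ with hCdef
  have hC : 0 < C := by rw [hCdef]; exact norm_pos_iff.mpr hwt1
  have hCne : (C:ℂ) ≠ 0 := by
    simp only [ne_eq, Complex.ofReal_eq_zero]
    exact ne_of_gt hC
  set c3 : ℝ := (wt 1).re / C with hc3def
  set s3 : ℝ := -α * (wt 1).im / C with hs3def
  have habs : (wt 1).re^2 + (wt 1).im^2 = C^2 := by
    rw [hCdef, Complex.sq_norm]
    simp [Complex.normSq_apply]
    ring
  have hcs : c3^2 + s3^2 = 1 := by
    rw [hc3def, hs3def]
    field_simp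
    linear_combination habs + (wt 1).im^2 * hα2
  set A : M4' := rotZ c3 s3 * B with hAdef
  have hAg : Good A := good_mul (good_rotZ c3 s3 hcs) hBg
  have hAm : A.mulVec m = ![1,0,0,1] := by
    rw [hAdef, ← Matrix.mulVec_mulVec, hBm, rotZ_mulVec]
    funext i
    fin_cases i <;> simp
  have hAk : A.mulVec k = ![β, 0, 0, β] := by
    have hk' : k = β • m := by
      funext ρ
      simp only [Pi.smul_apply, smul_eq_mul, hmdef]
      linear_combination -(k ρ) * hβ2
    rw [hk', Matrix.mulVec_smul, hAm]
    funext i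
    fin_cases i <;> simp
  have habsC : ((wt 1).re:ℂ)^2 + ((wt 1).im:ℂ)^2 = (C:ℂ)^2 := by exact_mod_cast habs
  have hz : wt 1 = ((wt 1).re:ℂ) + ((wt 1).im:ℂ) * Complex.I := (Complex.re_add_im (wt 1)).symm
  have hwtkey : (c3:ℂ) * wt 1 - (s3:ℂ) * wt 2 = (C:ℂ) := by
    rw [hwt2, hc3def, hs3def]
    push_cast
    rw [show ((wt 1).re / C : ℂ) * wt 1 - (-(α:ℂ) * (wt 1).im / C) * (-(α:ℂ) * Complex.I * wt 1)
        = wt 1 * (((wt 1).re:ℂ) - ((α:ℂ))^2 * ((wt 1).im:ℂ) * Complex.I) / C by ring, hα2C]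
    field_simp
    linear_combination habsC - (((wt 1).im:ℂ))^2 * Complex.I_sq +
      (((wt 1).re:ℂ) - ((wt 1).im:ℂ) * Complex.I) * hz
  have hwtkey2 : (s3:ℂ) * wt 1 + (c3:ℂ) * wt 2 = -(α:ℂ) * Complex.I * (C:ℂ) := by
    have hkey' := hwtkey
    rw [hwt2] at hkey' ⊢
    linear_combination -(α:ℂ) * Complex.I * hkey' + (s3:ℂ) * wt 1 * Complex.I^2 * hα2C +
      (s3:ℂ) * wt 1 * Complex.I_sq
  have hAw : mvC A w = ![wt 0, (C:ℂ), -(α:ℂ) * Complex.I * (C:ℂ), wt 0] := by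
    rw [hAdef, mvC_comp, ← hwtdef, rotZ_mvC]
    funext i
    refine fin4_cases (fun i => (![wt 0, (c3:ℂ) * wt 1 - (s3:ℂ) * wt 2,
        (s3:ℂ) * wt 1 + (c3:ℂ) * wt 2, wt 3]) i
        = (![wt 0, (C:ℂ), -(α:ℂ) * Complex.I * (C:ℂ), wt 0]) i) ?_ ?_ ?_ ?_ i
    · simp
    · simpa using hwtkey
    · simpa using hwtkey2
    · simpa using hwt3
  -- assemble
  refine ⟨A.transpose, C, β, ?_, ?_, ?_, hC, hβ, ?_⟩
  · show A.transpose.transpose * etaM * A.transpose = etaM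
    rw [Matrix.transpose_transpose]
    exact hAg.1
  · rw [Matrix.det_transpose]
    exact hAg.2.2.1
  · show 1 ≤ A.transpose 0 0
    have hA00 : A 0 0 = ch := by
      rw [hAdef, hBdef]
      rw [Matrix.mul_apply, Fin.sum_univ_four]
      rw [Matrix.mul_apply, Fin.sum_univ_four, Matrix.mul_apply, Fin.sum_univ_four,
        Matrix.mul_apply, Fin.sum_univ_four, Matrix.mul_apply, Fin.sum_univ_four]
      simp [rotZ, boostM, hA100, hA130]
    rw [Matrix.transpose_apply, hA00, hchdef]
    have hkey : (m 0 + 1/m 0)/2 - 1 = (m 0 - 1)^2/(2 * m 0) := by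
      field_simp
      ring
    nlinarith [sq_nonneg (m 0 - 1), div_nonneg (sq_nonneg (m 0 - 1)) (by linarith : (0:ℝ) ≤ 2 * m 0)]
  · -- final functional identity
    intro x μ ν
    simp only [Matrix.transpose_apply, hdEx]
    -- component equations for A·k and A·w
    have hSc : ∀ σ : Fin 4, (A σ 0:ℂ) * (k 0:ℂ) + (A σ 1:ℂ) * (k 1:ℂ) +
        (A σ 2:ℂ) * (k 2:ℂ) + (A σ 3:ℂ) * (k 3:ℂ) = (((![β,0,0,β] : Fin 4 → ℝ) σ:ℝ):ℂ) := by
      intro σ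
      have h1 : A σ 0 * k 0 + A σ 1 * k 1 + A σ 2 * k 2 + A σ 3 * k 3
          = (![β,0,0,β] : Fin 4 → ℝ) σ := by
        have := congr_fun hAk σ
        simpa [Matrix.mulVec, dotProduct, Fin.sum_univ_four] using this
      exact_mod_cast congr_arg (fun r : ℝ => (r:ℂ)) h1
    have hTc : ∀ σ : Fin 4, (A σ 0:ℂ) * w 0 + (A σ 1:ℂ) * w 1 +
        (A σ 2:ℂ) * w 2 + (A σ 3:ℂ) * w 3
        = (![wt 0, (C:ℂ), -(α:ℂ) * Complex.I * (C:ℂ), wt 0]) σ := by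
      intro σ
      have := congr_fun hAw σ
      simpa [mvC, Fin.sum_univ_four] using this
    have hexpC : (∑ σ : Fin 4, (k σ:ℂ) * ((∑ σ₂ : Fin 4, A σ₂ σ * x σ₂ : ℝ):ℂ))
        = -((β:ℂ) * (x 0:ℂ) + (β:ℂ) * (x 3:ℂ)) * (-1) := by
      push_cast
      simp only [Fin.sum_univ_four]
      have h0 := hSc 0
      have h1 := hSc 1
      have h2 := hSc 2
      have h3 := hSc 3
      norm_num [Matrix.cons_val_three, Matrix.cons_val_two, Matrix.vecHead, Matrix.vecTail] at h0 h1 h2 h3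
      linear_combination (x 0:ℂ) * h0 + (x 1:ℂ) * h1 + (x 2:ℂ) * h2 + (x 3:ℂ) * h3
    rw [show (canonicalWave C α β) = fun y ρ => ((C:ℂ) * (![0, 1, -(α:ℂ) * Complex.I, 0] ρ)) *
        Complex.exp (-Complex.I * ∑ σ : Fin 4, (((![β,0,0,β] : Fin 4 → ℝ) σ:ℝ):ℂ) * (y σ:ℂ))
      from funext fun y => funext fun ρ => by
        simp only [canonicalWave]
        congr 1
        rw [Fin.sum_univ_four]
        norm_num [Matrix.cons_val_three, Matrix.cons_val_two, Matrix.vecHead, Matrix.vecTail]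
        try ring]
    rw [dEx_plane]
    have hexpc2 : (∑ σ : Fin 4, (((![β,0,0,β] : Fin 4 → ℝ) σ:ℝ):ℂ) * (x σ:ℂ))
        = -((β:ℂ) * (x 0:ℂ) + (β:ℂ) * (x 3:ℂ)) * (-1) := by
      rw [Fin.sum_univ_four]
      norm_num [Matrix.cons_val_three, Matrix.cons_val_two, Matrix.vecHead, Matrix.vecTail]
      try ring
    simp only [hexpC, hexpc2]
    set E : ℂ := Complex.exp (-Complex.I * (-((β:ℂ) * (x 0:ℂ) + (β:ℂ) * (x 3:ℂ)) * (-1))) with hEdef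
    trans (-Complex.I * E * (((A μ 0:ℂ) * (k 0:ℂ) + (A μ 1:ℂ) * (k 1:ℂ) + (A μ 2:ℂ) * (k 2:ℂ) + (A μ 3:ℂ) * (k 3:ℂ)) *
        ((A ν 0:ℂ) * w 0 + (A ν 1:ℂ) * w 1 + (A ν 2:ℂ) * w 2 + (A ν 3:ℂ) * w 3) -
        ((A μ 0:ℂ) * w 0 + (A μ 1:ℂ) * w 1 + (A μ 2:ℂ) * w 2 + (A μ 3:ℂ) * w 3) *
        ((A ν 0:ℂ) * (k 0:ℂ) + (A ν 1:ℂ) * (k 1:ℂ) + (A ν 2:ℂ) * (k 2:ℂ) + (A ν 3:ℂ) * (k 3:ℂ))))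
    · simp only [Fin.sum_univ_four]
      ring
    · rw [hSc μ, hSc ν, hTc μ, hTc ν]
      have swap : ∀ a b : Fin 4, (((![β,0,0,β] : Fin 4 → ℝ) a:ℝ):ℂ) *
          ((![wt 0, (C:ℂ), -(α:ℂ) * Complex.I * (C:ℂ), wt 0]) b) -
          ((![wt 0, (C:ℂ), -(α:ℂ) * Complex.I * (C:ℂ), wt 0]) a) *
          (((![β,0,0,β] : Fin 4 → ℝ) b:ℝ):ℂ)
          = (((![β,0,0,β] : Fin 4 → ℝ) a:ℝ):ℂ) * ((C:ℂ) * (![0, 1, -(α:ℂ) * Complex.I, 0] b)) -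
            (((![β,0,0,β] : Fin 4 → ℝ) b:ℝ):ℂ) * ((C:ℂ) * (![0, 1, -(α:ℂ) * Complex.I, 0] a)) := by
        intro a b
        fin_cases a <;> fin_cases b <;>
          simp [Matrix.vecHead, Matrix.vecTail] <;> push_cast <;> (try ring) <;> tauto
      rw [show (-Complex.I * E * ((((![β,0,0,β] : Fin 4 → ℝ) μ:ℝ):ℂ) *
          ((![wt 0, (C:ℂ), -(α:ℂ) * Complex.I * (C:ℂ), wt 0]) ν) -
          ((![wt 0, (C:ℂ), -(α:ℂ) * Complex.I * (C:ℂ), wt 0]) μ) *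
          (((![β,0,0,β] : Fin 4 → ℝ) ν:ℝ):ℂ)))
        = -Complex.I * E * ((((![β,0,0,β] : Fin 4 → ℝ) μ:ℝ):ℂ) * ((C:ℂ) * (![0, 1, -(α:ℂ) * Complex.I, 0] ν)) -
            (((![β,0,0,β] : Fin 4 → ℝ) ν:ℝ):ℂ) * ((C:ℂ) * (![0, 1, -(α:ℂ) * Complex.I, 0] μ)))
        from by rw [swap μ ν]]
      ring
end
end

section
/- Let u be a non-trivial plane wave solution on Minkowski space of the polarized Maxwell equation *du = αi·du (α = ±1), let F := du, and define the Riemann curvature R_{κλμν}(x) := Re(F_{κλ}(x) F_{μν}(x)). Then R possesses all the symmetry properties of a Riemann curvature generated by a Levi-Civita connection: R_{κλμν} = −R_{λκμν} = −R_{κλνμ} = R_{μνκλ}, and the cyclic sum identity R_{κλμν} ε^{κλμν} = 0 holds at every point. -/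
noncomputable section
open Complex Finset

/-- The Riemann curvature of the spacetimes of Theorem 2:
`R_{κλμν}(x) = Re(F_{κλ}(x) F_{μν}(x))` with `F = du`. -/
def Rwave (u : (Fin 4 → ℝ) → Fin 4 → ℂ) (x : Fin 4 → ℝ) (κ lam μ ν : Fin 4) : ℝ :=
  (dEx u x κ lam * dEx u x μ ν).re

/-!
The three index symmetries only use that `F = du` is antisymmetric and that `F_{κλ} F_{μν}` is
symmetric under exchanging the pairs. For the cyclic identity, the plane wave gives
`F = -i e^{-ik·x} k ∧ w`, a decomposable 2-form; raising indices keeps it decomposable, and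
`ε^{κλμν} (a ∧ b)_{κλ} (a ∧ b)_{μν}` is (a multiple of) `a ∧ b ∧ a ∧ b = 0`.
-/

def wedge {R : Type*} [CommRing R] (a b : Fin 4 → R) (μ ν : Fin 4) : R :=
  a μ * b ν - a ν * b μ

theorem sum_eps_wedge_mul_wedge {R : Type*} [CommRing R] [Algebra ℝ R] (a b : Fin 4 → R) :
    ∑ κ : Fin 4, ∑ l : Fin 4, ∑ μ : Fin 4, ∑ ν : Fin 4,
      algebraMap ℝ R (eps κ l μ ν) * (wedge a b κ l * wedge a b μ ν) = 0 := by
  simp only [Fin.sum_univ_four, eps, fv, wedge]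
  norm_num
  ring

theorem gR_mul_gR_mul_wedge {R : Type*} [CommRing R] [Algebra ℝ R] (a b : Fin 4 → R)
    (κ l : Fin 4) :
    algebraMap ℝ R (gR κ κ * gR l l) * wedge a b κ l =
      wedge (fun μ => algebraMap ℝ R (gR μ μ) * a μ) (fun μ => algebraMap ℝ R (gR μ μ) * b μ)
        κ l := by
  simp only [wedge, map_mul]
  ring

theorem dEx_antisymm (u : (Fin 4 → ℝ) → Fin 4 → ℂ) (x : Fin 4 → ℝ) (μ ν : Fin 4) :
    dEx u x μ ν = -dEx u x ν μ := by
  simp [dEx]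

theorem Rwave_swap_left (u : (Fin 4 → ℝ) → Fin 4 → ℂ) (x : Fin 4 → ℝ) (κ l μ ν : Fin 4) :
    Rwave u x κ l μ ν = -Rwave u x l κ μ ν := by
  simp [Rwave, dEx_antisymm u x l κ]

theorem Rwave_swap_right (u : (Fin 4 → ℝ) → Fin 4 → ℂ) (x : Fin 4 → ℝ) (κ l μ ν : Fin 4) :
    Rwave u x κ l μ ν = -Rwave u x κ l ν μ := by
  simp [Rwave, dEx_antisymm u x ν μ]

theorem Rwave_swap_pairs (u : (Fin 4 → ℝ) → Fin 4 → ℂ) (x : Fin 4 → ℝ) (κ l μ ν : Fin 4) :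
    Rwave u x κ l μ ν = Rwave u x μ ν κ l := by
  rw [Rwave, Rwave, mul_comm]

theorem sum_gR_Rwave_eps_eq_re (u : (Fin 4 → ℝ) → Fin 4 → ℂ) (x : Fin 4 → ℝ) :
    ∑ κ : Fin 4, ∑ l : Fin 4, ∑ μ : Fin 4, ∑ ν : Fin 4,
        gR κ κ * gR l l * gR μ μ * gR ν ν * Rwave u x κ l μ ν * eps κ l μ ν =
      (∑ κ : Fin 4, ∑ l : Fin 4, ∑ μ : Fin 4, ∑ ν : Fin 4,
        ((gR κ κ * gR l l * gR μ μ * gR ν ν * eps κ l μ ν : ℝ) : ℂ) *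
          (dEx u x κ l * dEx u x μ ν)).re := by
  simp only [Complex.re_sum, Complex.re_ofReal_mul, Rwave]
  refine sum_congr rfl fun κ _ => sum_congr rfl fun l _ =>
    sum_congr rfl fun μ _ => sum_congr rfl fun ν _ => by ring

def dotCLM (k : Fin 4 → ℝ) : (Fin 4 → ℝ) →L[ℝ] ℂ :=
  ∑ ρ : Fin 4, (k ρ : ℂ) • (ofRealCLM.comp (ContinuousLinearMap.proj ρ))

theorem dotCLM_apply (k y : Fin 4 → ℝ) : dotCLM k y = ∑ ρ : Fin 4, (k ρ : ℂ) * (y ρ : ℂ) := by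
  simp [dotCLM]

theorem pd_mul_cexp (c : ℂ) (k x : Fin 4 → ℝ) (μ : Fin 4) :
    pd μ (fun y : Fin 4 → ℝ => c * exp (-I * ∑ ρ : Fin 4, (k ρ : ℂ) * (y ρ : ℂ))) x =
      -I * k μ * (c * exp (-I * ∑ ρ : Fin 4, (k ρ : ℂ) * (x ρ : ℂ))) := by
  have h := (((dotCLM k).hasFDerivAt (x := x)).const_mul (-I)).cexp.const_mul c
  simp only [dotCLM_apply] at h
  rw [pd, h.fderiv]
  simp only [neg_mul, smul_apply, dotCLM_apply, Pi.single_apply, apply_ite, ofReal_one,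
    ofReal_zero, mul_one, mul_zero, sum_ite_eq', mem_univ, ↓reduceIte, smul_eq_mul, mul_neg,
    neg_inj]
  ring

theorem dEx_eq_wedge_of_planeWave (u : (Fin 4 → ℝ) → Fin 4 → ℂ) (w : Fin 4 → ℂ)
    (k : Fin 4 → ℝ)
    (hu : ∀ x μ, u x μ = w μ * exp (-I * ∑ ρ : Fin 4, (k ρ : ℂ) * (x ρ : ℂ)))
    (x : Fin 4 → ℝ) (μ ν : Fin 4) :
    dEx u x μ ν =
      -I * exp (-I * ∑ ρ : Fin 4, (k ρ : ℂ) * (x ρ : ℂ)) * wedge (fun ρ => (k ρ : ℂ)) w μ ν := by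
  have hu' : ∀ ν, (fun y => u y ν) = fun y : Fin 4 → ℝ =>
      w ν * exp (-I * ∑ ρ : Fin 4, (k ρ : ℂ) * (y ρ : ℂ)) := fun ν => funext fun y => hu y ν
  rw [dEx, hu', hu', pd_mul_cexp, pd_mul_cexp, wedge]
  ring

theorem curvature_levi_civita_symmetries_general (u : (Fin 4 → ℝ) → Fin 4 → ℂ)
    (hpw : IsPlaneWave u) :
    (∀ x κ lam μ ν, Rwave u x κ lam μ ν = - Rwave u x lam κ μ ν) ∧
    (∀ x κ lam μ ν, Rwave u x κ lam μ ν = - Rwave u x κ lam ν μ) ∧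
    (∀ x κ lam μ ν, Rwave u x κ lam μ ν = Rwave u x μ ν κ lam) ∧
    (∀ x, ∑ κ : Fin 4, ∑ lam : Fin 4, ∑ μ : Fin 4, ∑ ν : Fin 4,
        gR κ κ * gR lam lam * gR μ μ * gR ν ν * Rwave u x κ lam μ ν * eps κ lam μ ν = 0) := by
  refine ⟨Rwave_swap_left u, Rwave_swap_right u, Rwave_swap_pairs u, fun x => ?_⟩
  obtain ⟨w, k, -, hu⟩ := hpw
  set c := -I * exp (-I * ∑ ρ : Fin 4, (k ρ : ℂ) * (x ρ : ℂ))
  set a : Fin 4 → ℂ := fun μ => (gR μ μ : ℂ) * k μ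
  set b : Fin 4 → ℂ := fun μ => (gR μ μ : ℂ) * w μ
  have hterm : ∀ κ l μ ν, ((gR κ κ * gR l l * gR μ μ * gR ν ν * eps κ l μ ν : ℝ) : ℂ) *
      (dEx u x κ l * dEx u x μ ν) =
        c ^ 2 * (algebraMap ℝ ℂ (eps κ l μ ν) * (wedge a b κ l * wedge a b μ ν)) := by
    intro κ l μ ν
    have h := gR_mul_gR_mul_wedge (R := ℂ) (fun ρ => (k ρ : ℂ)) w
    simp only [Complex.coe_algebraMap] at h
    simp only [dEx_eq_wedge_of_planeWave u w k hu, ← h, a, b, c, Complex.coe_algebraMap]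
    push_cast
    ring
  rw [sum_gR_Rwave_eps_eq_re]
  simp only [hterm, ← mul_sum, sum_eps_wedge_mul_wedge, mul_zero, zero_re]

/-- for a non-trivial plane wave solution `u` of `*du = α i du`, the curvature
`R_{κλμν} = Re((du)_{κλ}(du)_{μν})` has all the symmetries of a Levi-Civita Riemann
curvature: `R_{κλμν} = −R_{λκμν} = −R_{κλνμ} = R_{μνκλ}` and `R_{κλμν} ε^{κλμν} = 0`. -/
theorem curvature_levi_civita_symmetries (u : (Fin 4 → ℝ) → Fin 4 → ℂ)
    (hpw : IsPlaneWave u)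
    (hnt : ¬ (∀ x μ ν, dEx u x μ ν = 0))
    (α : ℝ) (hα : α = 1 ∨ α = -1)
    (hpol : ∀ x μ ν, hodge (dEx u x) μ ν = (α : ℂ) * Complex.I * dEx u x μ ν) :
    (∀ x κ lam μ ν, Rwave u x κ lam μ ν = - Rwave u x lam κ μ ν) ∧
    (∀ x κ lam μ ν, Rwave u x κ lam μ ν = - Rwave u x κ lam ν μ) ∧
    (∀ x κ lam μ ν, Rwave u x κ lam μ ν = Rwave u x μ ν κ lam) ∧
    (∀ x, ∑ κ : Fin 4, ∑ lam : Fin 4, ∑ μ : Fin 4, ∑ ν : Fin 4,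
        gR κ κ * gR lam lam * gR μ μ * gR ν ν * Rwave u x κ lam μ ν * eps κ lam μ ν = 0) :=
  curvature_levi_civita_symmetries_general u hpw
end
end

section
/- Let u be a non-trivial plane wave solution on Minkowski space of the polarized Maxwell equation *du = αi·du (α = ±1), and define R_{κλμν}(x) := Re((du)_{κλ}(x)(du)_{μν}(x)). Then at every point R is anti-self-dual under double duality: *R* = −R, where (*R*)_{κλμν} := (1/4) ε^{κ′λ′}_{κλ} ε^{μ′ν′}_{μν} R_{κ′λ′μ′ν′}; that is, R lies in the invariant subspace 𝓡_{+−} (R^T = R and *R* = −R) singled out by Einstein's double duality analysis. -/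
noncomputable section
open Complex Finset

/-- The double dual `(*R*)_{κλμν} := (1/4) ε^{κ'λ'}_{κλ} ε^{μ'ν'}_{μν} R_{κ'λ'μ'ν'}`,
primed indices raised with the Minkowski metric. -/
def dd (R : Fin 4 → Fin 4 → Fin 4 → Fin 4 → ℝ) (κ lam μ ν : Fin 4) : ℝ :=
  (1/4) * ∑ κ' : Fin 4, ∑ l' : Fin 4, ∑ μ' : Fin 4, ∑ ν' : Fin 4,
    gR κ' κ' * gR l' l' * gR μ' μ' * gR ν' ν' * eps κ' l' κ lam * eps μ' ν' μ ν * R κ' l' μ' ν'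

/-! Expanding both Hodge stars shows that the double dual of `Re(F ⊗ G)` is `Re(*F ⊗ *G)`.
For a polarized field `*F = c F` with `c² = -1`, so `*F ⊗ *F = -F ⊗ F`. -/

theorem dd_re_mul (F G : Fin 4 → Fin 4 → ℂ) (κ l μ ν : Fin 4) :
    dd (fun κ' l' μ' ν' => (F κ' l' * G μ' ν').re) κ l μ ν = (hodge F κ l * hodge G μ ν).re := by
  rw [dd, hodge, hodge, mul_mul_mul_comm, sum_mul_sum]
  simp_rw [sum_mul_sum, mul_sum, re_sum]
  refine sum_congr rfl fun a _ => ?_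
  rw [sum_comm]
  refine sum_congr rfl fun b _ => sum_congr rfl fun c _ =>
    sum_congr rfl fun d _ => ?_
  rw [← mul_assoc, ← re_ofReal_mul]
  congr 1
  push_cast
  ring

theorem dd_re_mul_self_eq_neg_of_hodge_eq {F : Fin 4 → Fin 4 → ℂ} {c : ℂ} (hc : c ^ 2 = -1)
    (hF : ∀ μ ν, hodge F μ ν = c * F μ ν) (κ l μ ν : Fin 4) :
    dd (fun κ' l' μ' ν' => (F κ' l' * F μ' ν').re) κ l μ ν = -(F κ l * F μ ν).re := by
  rw [dd_re_mul, hF, hF, ← neg_re]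
  congr 1
  linear_combination F κ l * F μ ν * hc

theorem curvature_in_R_plus_minus_general (u : (Fin 4 → ℝ) → Fin 4 → ℂ)
    (α : ℝ) (hα : α = 1 ∨ α = -1)
    (hpol : ∀ x μ ν, hodge (dEx u x) μ ν = (α : ℂ) * Complex.I * dEx u x μ ν) :
    (∀ x κ lam μ ν, dd (Rwave u x) κ lam μ ν = - Rwave u x κ lam μ ν) ∧
    (∀ x κ lam μ ν, Rwave u x μ ν κ lam = Rwave u x κ lam μ ν) := by
  have hαI : ((α : ℂ) * I) ^ 2 = -1 := by rcases hα with rfl | rfl <;> simp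
  exact ⟨fun x => dd_re_mul_self_eq_neg_of_hodge_eq hαI (hpol x),
    fun x κ lam μ ν => congrArg re (mul_comm _ _)⟩

/-- for a non-trivial plane wave solution `u` of `*du = α i du`, the curvature
`R_{κλμν} = Re((du)_{κλ}(du)_{μν})` is, at every point, anti-self-dual under double duality,
`*R* = −R`, and symmetric under exchange of index pairs, `R^T = R`; i.e. it lies in Einstein's
invariant subspace `𝓡₊₋`. -/
theorem curvature_in_R_plus_minus (u : (Fin 4 → ℝ) → Fin 4 → ℂ)
    (hpw : IsPlaneWave u)
    (hnt : ¬ (∀ x μ ν, dEx u x μ ν = 0))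
    (α : ℝ) (hα : α = 1 ∨ α = -1)
    (hpol : ∀ x μ ν, hodge (dEx u x) μ ν = (α : ℂ) * Complex.I * dEx u x μ ν) :
    (∀ x κ lam μ ν, dd (Rwave u x) κ lam μ ν = - Rwave u x κ lam μ ν) ∧
    (∀ x κ lam μ ν, Rwave u x μ ν κ lam = Rwave u x κ lam μ ν) :=
  curvature_in_R_plus_minus_general u α hα hpol
end
end

section
/- (Rainich) In the 36-dimensional real vector space 𝓡 of rank-4 tensors R on ℝ⁴ satisfying R_{κλμν} = −R_{λκμν} = −R_{κλνμ}, the subspace 𝓡_{++} := {R ∈ 𝓡 : R^T = R and *R* = R} has dimension 9, and the subspace 𝓡_{+−} := {R ∈ 𝓡 : R^T = R and *R* = −R} has dimension 12. -/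
noncomputable section
open Complex Finset

lemma dd_add (a b : Fin 4 → Fin 4 → Fin 4 → Fin 4 → ℝ) (κ lam μ ν : Fin 4) :
    dd (a + b) κ lam μ ν = dd a κ lam μ ν + dd b κ lam μ ν := by
  simp only [dd, Pi.add_apply, mul_add, Finset.sum_add_distrib]

lemma dd_smul (c : ℝ) (a : Fin 4 → Fin 4 → Fin 4 → Fin 4 → ℝ) (κ lam μ ν : Fin 4) :
    dd (c • a) κ lam μ ν = c * dd a κ lam μ ν := by
  simp only [dd, Pi.smul_apply, smul_eq_mul, Finset.mul_sum]
  refine Finset.sum_congr rfl fun κ' _ => Finset.sum_congr rfl fun l' _ =>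
    Finset.sum_congr rfl fun μ' _ => Finset.sum_congr rfl fun ν' _ => by ring

/-- The 36-dimensional space `𝓡` of rank-4 tensors with
`R_{κλμν} = −R_{λκμν} = −R_{κλνμ}`. -/
def Rspace : Submodule ℝ (Fin 4 → Fin 4 → Fin 4 → Fin 4 → ℝ) where
  carrier := {R | ∀ κ lam μ ν, R κ lam μ ν = - R lam κ μ ν ∧ R κ lam μ ν = - R κ lam ν μ}
  add_mem' := by
    intro a b ha hb κ lam μ ν
    obtain ⟨h1, h2⟩ := ha κ lam μ ν
    obtain ⟨h3, h4⟩ := hb κ lam μ ν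
    constructor <;> simp only [Pi.add_apply] <;> linarith
  zero_mem' := by intro κ lam μ ν; simp
  smul_mem' := by
    intro c a ha κ lam μ ν
    obtain ⟨h1, h2⟩ := ha κ lam μ ν
    constructor <;> simp only [Pi.smul_apply, smul_eq_mul]
    · rw [h1]; ring
    · rw [h2]; ring

/-- Einstein's invariant subspace `𝓡₊₊ = {R ∈ 𝓡 : Rᵀ = R, *R* = R}`. -/
def Rpp : Submodule ℝ (Fin 4 → Fin 4 → Fin 4 → Fin 4 → ℝ) where
  carrier := {R | (∀ κ lam μ ν, R κ lam μ ν = - R lam κ μ ν ∧ R κ lam μ ν = - R κ lam ν μ)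
    ∧ (∀ κ lam μ ν, R μ ν κ lam = R κ lam μ ν)
    ∧ (∀ κ lam μ ν, dd R κ lam μ ν = R κ lam μ ν)}
  add_mem' := by
    intro a b ha hb
    refine ⟨fun κ lam μ ν => ?_, fun κ lam μ ν => ?_, fun κ lam μ ν => ?_⟩
    · obtain ⟨h1, h2⟩ := ha.1 κ lam μ ν
      obtain ⟨h3, h4⟩ := hb.1 κ lam μ ν
      constructor <;> simp only [Pi.add_apply] <;> linarith
    · have := ha.2.1 κ lam μ ν; have := hb.2.1 κ lam μ ν
      simp only [Pi.add_apply]; linarith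
    · have := ha.2.2 κ lam μ ν; have := hb.2.2 κ lam μ ν
      rw [dd_add]; simp only [Pi.add_apply]; linarith
  zero_mem' := by
    refine ⟨fun κ lam μ ν => by simp, fun κ lam μ ν => by simp, fun κ lam μ ν => ?_⟩
    have : dd (0 : Fin 4 → Fin 4 → Fin 4 → Fin 4 → ℝ) κ lam μ ν
        = dd ((0:ℝ) • (0 : Fin 4 → Fin 4 → Fin 4 → Fin 4 → ℝ)) κ lam μ ν := by norm_num
    rw [this, dd_smul]; simp
  smul_mem' := by
    intro c a ha
    refine ⟨fun κ lam μ ν => ?_, fun κ lam μ ν => ?_, fun κ lam μ ν => ?_⟩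
    · obtain ⟨h1, h2⟩ := ha.1 κ lam μ ν
      constructor <;> simp only [Pi.smul_apply, smul_eq_mul]
      · rw [h1]; ring
      · rw [h2]; ring
    · have := ha.2.1 κ lam μ ν
      simp only [Pi.smul_apply, smul_eq_mul]; rw [this]
    · have := ha.2.2 κ lam μ ν
      rw [dd_smul]; simp only [Pi.smul_apply, smul_eq_mul]; rw [this]

/-- Einstein's invariant subspace `𝓡₊₋ = {R ∈ 𝓡 : Rᵀ = R, *R* = −R}`. -/
def Rpm : Submodule ℝ (Fin 4 → Fin 4 → Fin 4 → Fin 4 → ℝ) where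
  carrier := {R | (∀ κ lam μ ν, R κ lam μ ν = - R lam κ μ ν ∧ R κ lam μ ν = - R κ lam ν μ)
    ∧ (∀ κ lam μ ν, R μ ν κ lam = R κ lam μ ν)
    ∧ (∀ κ lam μ ν, dd R κ lam μ ν = - R κ lam μ ν)}
  add_mem' := by
    intro a b ha hb
    refine ⟨fun κ lam μ ν => ?_, fun κ lam μ ν => ?_, fun κ lam μ ν => ?_⟩
    · obtain ⟨h1, h2⟩ := ha.1 κ lam μ ν
      obtain ⟨h3, h4⟩ := hb.1 κ lam μ ν
      constructor <;> simp only [Pi.add_apply] <;> linarith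
    · have := ha.2.1 κ lam μ ν; have := hb.2.1 κ lam μ ν
      simp only [Pi.add_apply]; linarith
    · have := ha.2.2 κ lam μ ν; have := hb.2.2 κ lam μ ν
      rw [dd_add]; simp only [Pi.add_apply]; linarith
  zero_mem' := by
    refine ⟨fun κ lam μ ν => by simp, fun κ lam μ ν => by simp, fun κ lam μ ν => ?_⟩
    have : dd (0 : Fin 4 → Fin 4 → Fin 4 → Fin 4 → ℝ) κ lam μ ν
        = dd ((0:ℝ) • (0 : Fin 4 → Fin 4 → Fin 4 → Fin 4 → ℝ)) κ lam μ ν := by norm_num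
    rw [this, dd_smul]; simp
  smul_mem' := by
    intro c a ha
    refine ⟨fun κ lam μ ν => ?_, fun κ lam μ ν => ?_, fun κ lam μ ν => ?_⟩
    · obtain ⟨h1, h2⟩ := ha.1 κ lam μ ν
      constructor <;> simp only [Pi.smul_apply, smul_eq_mul]
      · rw [h1]; ring
      · rw [h2]; ring
    · have := ha.2.1 κ lam μ ν
      simp only [Pi.smul_apply, smul_eq_mul]; rw [this]
    · have := ha.2.2 κ lam μ ν
      rw [dd_smul]; simp only [Pi.smul_apply, smul_eq_mul]; rw [this]; ring

lemma eps_swap (a b c d : Fin 4) : eps a b d c = - eps a b c d := by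
  simp only [eps]; ring

/-- first components of the six ordered index pairs -/
def pa : Fin 6 → Fin 4 := fun i => if i = 0 ∨ i = 1 ∨ i = 2 then 0 else if i = 3 ∨ i = 4 then 1 else 2
/-- second components of the six ordered index pairs -/
def pb : Fin 6 → Fin 4 := fun i => if i = 0 then 1 else if i = 1 ∨ i = 3 then 2 else 3
/-- the complementary pair -/
def rev : Fin 6 → Fin 6 := fun i => 5 - i
def sigZ : Fin 6 → ℤ := fun i => if i = 0 ∨ i = 2 ∨ i = 4 then 1 else -1
def sg (i : Fin 6) : ℝ := (sigZ i : ℝ)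

def psgnZ (a b : Fin 4) : ℤ :=
  if a = b then 0 else if (a = 0) ∨ (a = 1 ∧ ¬ b = 0) ∨ (a = 2 ∧ b = 3) then 1 else -1
def psgn (a b : Fin 4) : ℝ := (psgnZ a b : ℝ)
def pidx (a b : Fin 4) : Fin 6 :=
  if a = 0 ∧ b = 1 ∨ a = 1 ∧ b = 0 then 0
  else if a = 0 ∧ b = 2 ∨ a = 2 ∧ b = 0 then 1
  else if a = 0 ∨ b = 0 then 2
  else if a = 1 ∧ b = 2 ∨ a = 2 ∧ b = 1 then 3
  else if a = 1 ∨ b = 1 then 4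
  else 5

lemma psgnZ_swap (a b : Fin 4) : psgnZ b a = - psgnZ a b := by revert a b; decide
lemma psgn_swap (a b : Fin 4) : psgn b a = - psgn a b := by
  simp only [psgn]; rw [psgnZ_swap]; push_cast; ring
lemma pidx_symm (a b : Fin 4) : pidx b a = pidx a b := by revert a b; decide
lemma psgnZ_pab (i : Fin 6) : psgnZ (pa i) (pb i) = 1 := by revert i; decide
lemma psgn_pab (i : Fin 6) : psgn (pa i) (pb i) = 1 := by
  simp [psgn, psgnZ_pab]
lemma pidx_pab (i : Fin 6) : pidx (pa i) (pb i) = i := by revert i; decide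

/-- components of a tensor at the 36 ordered index pairs -/
def Mcomp (R : Fin 4 → Fin 4 → Fin 4 → Fin 4 → ℝ) (i j : Fin 6) : ℝ :=
  R (pa i) (pb i) (pa j) (pb j)

/-- the tensor built from a 6×6 matrix of ordered components -/
def Tgen (M : Fin 6 → Fin 6 → ℝ) : Fin 4 → Fin 4 → Fin 4 → Fin 4 → ℝ :=
  fun k l m n => psgn k l * psgn m n * M (pidx k l) (pidx m n)

lemma Tgen_a1 (M : Fin 6 → Fin 6 → ℝ) (a b c d : Fin 4) :
    Tgen M a b c d = - Tgen M b a c d := by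
  simp only [Tgen]
  rw [show psgn b a = -psgn a b from psgn_swap a b, show pidx b a = pidx a b from pidx_symm a b]
  ring
lemma Tgen_a2 (M : Fin 6 → Fin 6 → ℝ) (a b c d : Fin 4) :
    Tgen M a b c d = - Tgen M a b d c := by
  simp only [Tgen]
  rw [show psgn d c = -psgn c d from psgn_swap c d, show pidx d c = pidx c d from pidx_symm c d]
  ring

lemma Mcomp_Tgen (M : Fin 6 → Fin 6 → ℝ) (i j : Fin 6) : Mcomp (Tgen M) i j = M i j := by
  simp [Mcomp, Tgen, psgn_pab, pidx_pab]

lemma recon1 (f : Fin 4 → Fin 4 → ℝ) (hf : ∀ a b, f a b = - f b a) (a b : Fin 4) :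
    f a b = psgn a b * f (pa (pidx a b)) (pb (pidx a b)) := by
  fin_cases a <;> fin_cases b
  · show f 0 0 = ((0 : ℤ) : ℝ) * f 0 3
    push_cast
    linarith [hf 0 0]
  · show f 0 1 = ((1 : ℤ) : ℝ) * f 0 1
    push_cast
    linarith [hf 0 1]
  · show f 0 2 = ((1 : ℤ) : ℝ) * f 0 2
    push_cast
    linarith [hf 0 2]
  · show f 0 3 = ((1 : ℤ) : ℝ) * f 0 3
    push_cast
    linarith [hf 0 3]
  · show f 1 0 = ((-1 : ℤ) : ℝ) * f 0 1
    push_cast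
    linarith [hf 1 0]
  · show f 1 1 = ((0 : ℤ) : ℝ) * f 1 3
    push_cast
    linarith [hf 1 1]
  · show f 1 2 = ((1 : ℤ) : ℝ) * f 1 2
    push_cast
    linarith [hf 1 2]
  · show f 1 3 = ((1 : ℤ) : ℝ) * f 1 3
    push_cast
    linarith [hf 1 3]
  · show f 2 0 = ((-1 : ℤ) : ℝ) * f 0 2
    push_cast
    linarith [hf 2 0]
  · show f 2 1 = ((-1 : ℤ) : ℝ) * f 1 2
    push_cast
    linarith [hf 2 1]
  · show f 2 2 = ((0 : ℤ) : ℝ) * f 2 3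
    push_cast
    linarith [hf 2 2]
  · show f 2 3 = ((1 : ℤ) : ℝ) * f 2 3
    push_cast
    linarith [hf 2 3]
  · show f 3 0 = ((-1 : ℤ) : ℝ) * f 0 3
    push_cast
    linarith [hf 3 0]
  · show f 3 1 = ((-1 : ℤ) : ℝ) * f 1 3
    push_cast
    linarith [hf 3 1]
  · show f 3 2 = ((-1 : ℤ) : ℝ) * f 2 3
    push_cast
    linarith [hf 3 2]
  · show f 3 3 = ((0 : ℤ) : ℝ) * f 2 3
    push_cast
    linarith [hf 3 3]

lemma inner_eval (f : Fin 4 → Fin 4 → ℝ) (i : Fin 6) :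
    ∑ x : Fin 4, ∑ y : Fin 4, gR x x * gR y y * eps x y (pa i) (pb i) * f x y
      = sg i * (f (pa (rev i)) (pb (rev i)) - f (pb (rev i)) (pa (rev i))) := by
  fin_cases i <;>
    simp [Fin.sum_univ_four, gR, eps, fv0, fv1, fv2, fv3, pa, pb, rev, sg, sigZ] <;> ring

lemma dd_restructure (R : Fin 4 → Fin 4 → Fin 4 → Fin 4 → ℝ) (a b c d : Fin 4) :
    dd R a b c d = (1/4) * ∑ x : Fin 4, ∑ y : Fin 4, gR x x * gR y y * eps x y a b *
      (∑ u : Fin 4, ∑ v : Fin 4, gR u u * gR v v * eps u v c d * R x y u v) := by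
  simp only [dd]
  congr 1
  refine Finset.sum_congr rfl fun x _ => Finset.sum_congr rfl fun y _ => ?_
  rw [Finset.mul_sum]
  refine Finset.sum_congr rfl fun u _ => ?_
  rw [Finset.mul_sum]
  refine Finset.sum_congr rfl fun v _ => ?_
  ring

lemma dd_eval (R : Fin 4 → Fin 4 → Fin 4 → Fin 4 → ℝ)
    (h1 : ∀ κ lam μ ν, R κ lam μ ν = - R lam κ μ ν)
    (h2 : ∀ κ lam μ ν, R κ lam μ ν = - R κ lam ν μ) (i j : Fin 6) :
    dd R (pa i) (pb i) (pa j) (pb j) = sg i * sg j * Mcomp R (rev i) (rev j) := by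
  rw [dd_restructure]
  have e1 : ∀ x y : Fin 4,
      (∑ u : Fin 4, ∑ v : Fin 4, gR u u * gR v v * eps u v (pa j) (pb j) * R x y u v)
        = sg j * (R x y (pa (rev j)) (pb (rev j)) - R x y (pb (rev j)) (pa (rev j))) :=
    fun x y => inner_eval (fun u v => R x y u v) j
  simp only [e1]
  have e2 := inner_eval
    (fun x y => sg j * (R x y (pa (rev j)) (pb (rev j)) - R x y (pb (rev j)) (pa (rev j)))) i
  rw [e2, Mcomp,
    h1 (pb (rev i)) (pa (rev i)) (pa (rev j)) (pb (rev j)),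
    h1 (pb (rev i)) (pa (rev i)) (pb (rev j)) (pa (rev j)),
    h2 (pa (rev i)) (pb (rev i)) (pb (rev j)) (pa (rev j))]
  ring

lemma dd_swap1 (R : Fin 4 → Fin 4 → Fin 4 → Fin 4 → ℝ) (κ lam μ ν : Fin 4) :
    dd R lam κ μ ν = - dd R κ lam μ ν := by
  have key : (∑ x : Fin 4, ∑ y : Fin 4, ∑ u : Fin 4, ∑ v : Fin 4,
      gR x x * gR y y * gR u u * gR v v * eps x y lam κ * eps u v μ ν * R x y u v)
      = ∑ x : Fin 4, ∑ y : Fin 4, ∑ u : Fin 4, ∑ v : Fin 4,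
        -(gR x x * gR y y * gR u u * gR v v * eps x y κ lam * eps u v μ ν * R x y u v) := by
    refine Finset.sum_congr rfl fun x _ => Finset.sum_congr rfl fun y _ =>
      Finset.sum_congr rfl fun u _ => Finset.sum_congr rfl fun v _ => ?_
    rw [show eps x y lam κ = - eps x y κ lam from eps_swap x y κ lam]
    ring
  simp only [dd, key, Finset.sum_neg_distrib]
  ring

lemma dd_swap2 (R : Fin 4 → Fin 4 → Fin 4 → Fin 4 → ℝ) (κ lam μ ν : Fin 4) :
    dd R κ lam ν μ = - dd R κ lam μ ν := by
  have key : (∑ x : Fin 4, ∑ y : Fin 4, ∑ u : Fin 4, ∑ v : Fin 4,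
      gR x x * gR y y * gR u u * gR v v * eps x y κ lam * eps u v ν μ * R x y u v)
      = ∑ x : Fin 4, ∑ y : Fin 4, ∑ u : Fin 4, ∑ v : Fin 4,
        -(gR x x * gR y y * gR u u * gR v v * eps x y κ lam * eps u v μ ν * R x y u v) := by
    refine Finset.sum_congr rfl fun x _ => Finset.sum_congr rfl fun y _ =>
      Finset.sum_congr rfl fun u _ => Finset.sum_congr rfl fun v _ => ?_
    rw [show eps u v ν μ = - eps u v μ ν from eps_swap u v μ ν]
    ring
  simp only [dd, key, Finset.sum_neg_distrib]
  ring

lemma recon (R : Fin 4 → Fin 4 → Fin 4 → Fin 4 → ℝ)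
    (h1 : ∀ κ lam μ ν, R κ lam μ ν = - R lam κ μ ν)
    (h2 : ∀ κ lam μ ν, R κ lam μ ν = - R κ lam ν μ) (κ lam μ ν : Fin 4) :
    R κ lam μ ν = Tgen (Mcomp R) κ lam μ ν := by
  have s1 := recon1 (fun a b => R a b μ ν) (fun a b => h1 a b μ ν) κ lam
  have s2 := recon1 (fun c d => R (pa (pidx κ lam)) (pb (pidx κ lam)) c d)
    (fun c d => h2 (pa (pidx κ lam)) (pb (pidx κ lam)) c d) μ ν
  simp only [Tgen, Mcomp]
  rw [s1, s2]
  ring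
def r1pp (k : Fin 9) : Fin 6 := if k = 0 then 0 else if k = 1 then 0 else if k = 2 then 0 else if k = 3 then 0 else if k = 4 then 0 else if k = 5 then 1 else if k = 6 then 1 else if k = 7 then 1 else 2

def r2pp (k : Fin 9) : Fin 6 := if k = 0 then 0 else if k = 1 then 1 else if k = 2 then 2 else if k = 3 then 3 else if k = 4 then 4 else if k = 5 then 1 else if k = 6 then 2 else if k = 7 then 3 else 2

def s1pm (k : Fin 12) : Fin 6 := if k = 0 then 0 else if k = 1 then 0 else if k = 2 then 0 else if k = 3 then 0 else if k = 4 then 0 else if k = 5 then 1 else if k = 6 then 1 else if k = 7 then 1 else if k = 8 then 2 else if k = 9 then 0 else if k = 10 then 1 else 2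

def s2pm (k : Fin 12) : Fin 6 := if k = 0 then 0 else if k = 1 then 1 else if k = 2 then 2 else if k = 3 then 3 else if k = 4 then 4 else if k = 5 then 1 else if k = 6 then 2 else if k = 7 then 3 else if k = 8 then 2 else if k = 9 then 5 else if k = 10 then 4 else 3

def orbpp (i j : Fin 6) : Fin 9 :=
  if i = 0 then (if j = 0 then 0 else if j = 1 then 1 else if j = 2 then 2 else if j = 3 then 3 else if j = 4 then 4 else 0) else if i = 1 then (if j = 0 then 1 else if j = 1 then 5 else if j = 2 then 6 else if j = 3 then 7 else if j = 4 then 0 else 4) else if i = 2 then (if j = 0 then 2 else if j = 1 then 6 else if j = 2 then 8 else if j = 3 then 0 else if j = 4 then 7 else 3) else if i = 3 then (if j = 0 then 3 else if j = 1 then 7 else if j = 2 then 0 else if j = 3 then 8 else if j = 4 then 6 else 2) else if i = 4 then (if j = 0 then 4 else if j = 1 then 0 else if j = 2 then 7 else if j = 3 then 6 else if j = 4 then 5 else 1) else (if j = 0 then 0 else if j = 1 then 4 else if j = 2 then 3 else if j = 3 then 2 else if j = 4 then 1 else 0)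

def cfpp (i j : Fin 6) : ℤ :=
  if i = 0 then (if j = 0 then 1 else if j = 1 then 1 else if j = 2 then 1 else if j = 3 then 1 else if j = 4 then 1 else 0) else if i = 1 then (if j = 0 then 1 else if j = 1 then 1 else if j = 2 then 1 else if j = 3 then 1 else if j = 4 then 0 else 1) else if i = 2 then (if j = 0 then 1 else if j = 1 then 1 else if j = 2 then 1 else if j = 3 then 0 else if j = 4 then 1 else -1) else if i = 3 then (if j = 0 then 1 else if j = 1 then 1 else if j = 2 then 0 else if j = 3 then 1 else if j = 4 then -1 else 1) else if i = 4 then (if j = 0 then 1 else if j = 1 then 0 else if j = 2 then 1 else if j = 3 then -1 else if j = 4 then 1 else -1) else (if j = 0 then 0 else if j = 1 then 1 else if j = 2 then -1 else if j = 3 then 1 else if j = 4 then -1 else 1)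

def orbpm (i j : Fin 6) : Fin 12 :=
  if i = 0 then (if j = 0 then 0 else if j = 1 then 1 else if j = 2 then 2 else if j = 3 then 3 else if j = 4 then 4 else 9) else if i = 1 then (if j = 0 then 1 else if j = 1 then 5 else if j = 2 then 6 else if j = 3 then 7 else if j = 4 then 10 else 4) else if i = 2 then (if j = 0 then 2 else if j = 1 then 6 else if j = 2 then 8 else if j = 3 then 11 else if j = 4 then 7 else 3) else if i = 3 then (if j = 0 then 3 else if j = 1 then 7 else if j = 2 then 11 else if j = 3 then 8 else if j = 4 then 6 else 2) else if i = 4 then (if j = 0 then 4 else if j = 1 then 10 else if j = 2 then 7 else if j = 3 then 6 else if j = 4 then 5 else 1) else (if j = 0 then 9 else if j = 1 then 4 else if j = 2 then 3 else if j = 3 then 2 else if j = 4 then 1 else 0)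

def cfpm (i j : Fin 6) : ℤ :=
  if i = 0 then (if j = 0 then 1 else if j = 1 then 1 else if j = 2 then 1 else if j = 3 then 1 else if j = 4 then 1 else 1) else if i = 1 then (if j = 0 then 1 else if j = 1 then 1 else if j = 2 then 1 else if j = 3 then 1 else if j = 4 then 1 else -1) else if i = 2 then (if j = 0 then 1 else if j = 1 then 1 else if j = 2 then 1 else if j = 3 then 1 else if j = 4 then -1 else 1) else if i = 3 then (if j = 0 then 1 else if j = 1 then 1 else if j = 2 then 1 else if j = 3 then -1 else if j = 4 then 1 else -1) else if i = 4 then (if j = 0 then 1 else if j = 1 then 1 else if j = 2 then -1 else if j = 3 then 1 else if j = 4 then -1 else 1) else (if j = 0 then 1 else if j = 1 then -1 else if j = 2 then 1 else if j = 3 then -1 else if j = 4 then 1 else -1)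

def EppZ (k : Fin 9) (i j : Fin 6) : ℤ :=
  if (i = r1pp k ∧ j = r2pp k) ∨ (i = r2pp k ∧ j = r1pp k) then 1
  else if (i = rev (r1pp k) ∧ j = rev (r2pp k)) ∨ (i = rev (r2pp k) ∧ j = rev (r1pp k)) then
    sigZ (r1pp k) * sigZ (r2pp k)
  else 0

def EpmZ (k : Fin 12) (i j : Fin 6) : ℤ :=
  if (i = s1pm k ∧ j = s2pm k) ∨ (i = s2pm k ∧ j = s1pm k) then 1
  else if (i = rev (s1pm k) ∧ j = rev (s2pm k)) ∨ (i = rev (s2pm k) ∧ j = rev (s1pm k)) then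
    -(sigZ (s1pm k) * sigZ (s2pm k))
  else 0

lemma Lpp1 : ∀ (k : Fin 9) (i j : Fin 6), EppZ k i j = if k = orbpp i j then cfpp i j else 0 := by
  decide
lemma Lpp2 : ∀ k : Fin 9, orbpp (r1pp k) (r2pp k) = k ∧ cfpp (r1pp k) (r2pp k) = 1 := by decide
lemma Lpp3 : ∀ (k : Fin 9) (i j : Fin 6), EppZ k j i = EppZ k i j := by decide
lemma Lpp4 : ∀ (k : Fin 9) (i j : Fin 6),
    EppZ k i j = sigZ i * sigZ j * EppZ k (rev i) (rev j) := by decide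
lemma Lpm1 : ∀ (k : Fin 12) (i j : Fin 6), EpmZ k i j = if k = orbpm i j then cfpm i j else 0 := by
  decide
lemma Lpm2 : ∀ k : Fin 12, orbpm (s1pm k) (s2pm k) = k ∧ cfpm (s1pm k) (s2pm k) = 1 := by decide
lemma Lpm3 : ∀ (k : Fin 12) (i j : Fin 6), EpmZ k j i = EpmZ k i j := by decide
lemma Lpm4 : ∀ (k : Fin 12) (i j : Fin 6),
    EpmZ k i j = -(sigZ i * sigZ j * EpmZ k (rev i) (rev j)) := by decide

lemma collapse {n : ℕ} [NeZero n] (c : Fin n → ℝ) (E : Fin n → ℤ) (K : Fin n) (S : ℤ)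
    (hE : ∀ k, E k = if k = K then S else 0) :
    ∑ k, c k * ((E k : ℤ) : ℝ) = c K * (S : ℝ) := by
  have h : ∀ k, c k * ((E k : ℤ) : ℝ) = if k = K then c k * (S : ℝ) else 0 := by
    intro k; rw [hE k]; split <;> simp
  rw [Finset.sum_congr rfl fun k _ => h k,
    Finset.sum_ite_eq' Finset.univ K (fun k => c k * (S : ℝ))]
  simp

def MofPP (c : Fin 9 → ℝ) (i j : Fin 6) : ℝ := ∑ k, c k * ((EppZ k i j : ℤ) : ℝ)
def MofPM (c : Fin 12 → ℝ) (i j : Fin 6) : ℝ := ∑ k, c k * ((EpmZ k i j : ℤ) : ℝ)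

lemma MofPP_eval (c : Fin 9 → ℝ) (i j : Fin 6) :
    MofPP c i j = c (orbpp i j) * ((cfpp i j : ℤ) : ℝ) :=
  collapse c (fun k => EppZ k i j) (orbpp i j) (cfpp i j) (fun k => Lpp1 k i j)
lemma MofPM_eval (c : Fin 12 → ℝ) (i j : Fin 6) :
    MofPM c i j = c (orbpm i j) * ((cfpm i j : ℤ) : ℝ) :=
  collapse c (fun k => EpmZ k i j) (orbpm i j) (cfpm i j) (fun k => Lpm1 k i j)

lemma MofPP_symm (c : Fin 9 → ℝ) (i j : Fin 6) : MofPP c j i = MofPP c i j := by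
  refine Finset.sum_congr rfl fun k _ => ?_
  rw [Lpp3 k i j]
lemma MofPM_symm (c : Fin 12 → ℝ) (i j : Fin 6) : MofPM c j i = MofPM c i j := by
  refine Finset.sum_congr rfl fun k _ => ?_
  rw [Lpm3 k i j]

lemma MofPP_rel (c : Fin 9 → ℝ) (i j : Fin 6) :
    MofPP c i j = sg i * sg j * MofPP c (rev i) (rev j) := by
  simp only [MofPP]
  rw [show sg i * sg j * (∑ k, c k * ((EppZ k (rev i) (rev j) : ℤ) : ℝ))
      = ∑ k, sg i * sg j * (c k * ((EppZ k (rev i) (rev j) : ℤ) : ℝ)) from by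
    rw [Finset.mul_sum]]
  refine Finset.sum_congr rfl fun k _ => ?_
  rw [Lpp4 k i j]
  push_cast [sg]
  ring

lemma MofPM_rel (c : Fin 12 → ℝ) (i j : Fin 6) :
    MofPM c i j = -(sg i * sg j * MofPM c (rev i) (rev j)) := by
  simp only [MofPM]
  rw [show -(sg i * sg j * (∑ k, c k * ((EpmZ k (rev i) (rev j) : ℤ) : ℝ)))
      = ∑ k, -(sg i * sg j * (c k * ((EpmZ k (rev i) (rev j) : ℤ) : ℝ))) from by
    rw [Finset.mul_sum, Finset.sum_neg_distrib]]
  refine Finset.sum_congr rfl fun k _ => ?_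
  rw [Lpm4 k i j]
  push_cast [sg]
  ring

lemma key_pp (N : Fin 6 → Fin 6 → ℝ) (hsym : ∀ i j, N j i = N i j)
    (hrel : ∀ i j, N i j = sg i * sg j * N (rev i) (rev j)) (i j : Fin 6) :
    N i j = N (r1pp (orbpp i j)) (r2pp (orbpp i j)) * ((cfpp i j : ℤ) : ℝ) := by
  have H : ∀ a b : Fin 6, N a b = (((sigZ a * sigZ b) : ℤ) : ℝ) * N (rev a) (rev b) := by
    intro a b; rw [hrel a b]; push_cast [sg]; ring
  fin_cases i <;> fin_cases j
  · show N 0 0 = N 0 0 * ((1 : ℤ) : ℝ)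
    have h := H 0 0
    rw [show rev 0 = 5 from rfl, show ((sigZ 0 * sigZ 0) : ℤ) = 1 from rfl] at h
    push_cast at h ⊢
    linarith [h, hsym 0 0]
  · show N 0 1 = N 0 1 * ((1 : ℤ) : ℝ)
    have h := H 0 1
    rw [show rev 0 = 5 from rfl, show rev 1 = 4 from rfl, show ((sigZ 0 * sigZ 1) : ℤ) = -1 from rfl] at h
    push_cast at h ⊢
    linarith [h, hsym 0 1, hsym 1 0]
  · show N 0 2 = N 0 2 * ((1 : ℤ) : ℝ)
    have h := H 0 2
    rw [show rev 0 = 5 from rfl, show rev 2 = 3 from rfl, show ((sigZ 0 * sigZ 2) : ℤ) = 1 from rfl] at h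
    push_cast at h ⊢
    linarith [h, hsym 0 2, hsym 2 0]
  · show N 0 3 = N 0 3 * ((1 : ℤ) : ℝ)
    have h := H 0 3
    rw [show rev 0 = 5 from rfl, show rev 3 = 2 from rfl, show ((sigZ 0 * sigZ 3) : ℤ) = -1 from rfl] at h
    push_cast at h ⊢
    linarith [h, hsym 0 3, hsym 3 0]
  · show N 0 4 = N 0 4 * ((1 : ℤ) : ℝ)
    have h := H 0 4
    rw [show rev 0 = 5 from rfl, show rev 4 = 1 from rfl, show ((sigZ 0 * sigZ 4) : ℤ) = 1 from rfl] at h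
    push_cast at h ⊢
    linarith [h, hsym 0 4, hsym 4 0]
  · show N 0 5 = N 0 0 * ((0 : ℤ) : ℝ)
    have h := H 0 5
    rw [show rev 0 = 5 from rfl, show rev 5 = 0 from rfl, show ((sigZ 0 * sigZ 5) : ℤ) = -1 from rfl] at h
    push_cast at h ⊢
    linarith [h, hsym 0 0, hsym 0 5, hsym 5 0]
  · show N 1 0 = N 0 1 * ((1 : ℤ) : ℝ)
    have h := H 1 0
    rw [show rev 1 = 4 from rfl, show rev 0 = 5 from rfl, show ((sigZ 1 * sigZ 0) : ℤ) = -1 from rfl] at h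
    push_cast at h ⊢
    linarith [h, hsym 0 1, hsym 1 0]
  · show N 1 1 = N 1 1 * ((1 : ℤ) : ℝ)
    have h := H 1 1
    rw [show rev 1 = 4 from rfl, show ((sigZ 1 * sigZ 1) : ℤ) = 1 from rfl] at h
    push_cast at h ⊢
    linarith [h, hsym 1 1]
  · show N 1 2 = N 1 2 * ((1 : ℤ) : ℝ)
    have h := H 1 2
    rw [show rev 1 = 4 from rfl, show rev 2 = 3 from rfl, show ((sigZ 1 * sigZ 2) : ℤ) = -1 from rfl] at h
    push_cast at h ⊢
    linarith [h, hsym 1 2, hsym 2 1]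
  · show N 1 3 = N 1 3 * ((1 : ℤ) : ℝ)
    have h := H 1 3
    rw [show rev 1 = 4 from rfl, show rev 3 = 2 from rfl, show ((sigZ 1 * sigZ 3) : ℤ) = 1 from rfl] at h
    push_cast at h ⊢
    linarith [h, hsym 1 3, hsym 3 1]
  · show N 1 4 = N 0 0 * ((0 : ℤ) : ℝ)
    have h := H 1 4
    rw [show rev 1 = 4 from rfl, show rev 4 = 1 from rfl, show ((sigZ 1 * sigZ 4) : ℤ) = -1 from rfl] at h
    push_cast at h ⊢
    linarith [h, hsym 0 0, hsym 1 4, hsym 4 1]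
  · show N 1 5 = N 0 4 * ((1 : ℤ) : ℝ)
    have h := H 1 5
    rw [show rev 1 = 4 from rfl, show rev 5 = 0 from rfl, show ((sigZ 1 * sigZ 5) : ℤ) = 1 from rfl] at h
    push_cast at h ⊢
    linarith [h, hsym 0 4, hsym 1 5, hsym 4 0, hsym 5 1]
  · show N 2 0 = N 0 2 * ((1 : ℤ) : ℝ)
    have h := H 2 0
    rw [show rev 2 = 3 from rfl, show rev 0 = 5 from rfl, show ((sigZ 2 * sigZ 0) : ℤ) = 1 from rfl] at h
    push_cast at h ⊢
    linarith [h, hsym 0 2, hsym 2 0]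
  · show N 2 1 = N 1 2 * ((1 : ℤ) : ℝ)
    have h := H 2 1
    rw [show rev 2 = 3 from rfl, show rev 1 = 4 from rfl, show ((sigZ 2 * sigZ 1) : ℤ) = -1 from rfl] at h
    push_cast at h ⊢
    linarith [h, hsym 1 2, hsym 2 1]
  · show N 2 2 = N 2 2 * ((1 : ℤ) : ℝ)
    have h := H 2 2
    rw [show rev 2 = 3 from rfl, show ((sigZ 2 * sigZ 2) : ℤ) = 1 from rfl] at h
    push_cast at h ⊢
    linarith [h, hsym 2 2]
  · show N 2 3 = N 0 0 * ((0 : ℤ) : ℝ)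
    have h := H 2 3
    rw [show rev 2 = 3 from rfl, show rev 3 = 2 from rfl, show ((sigZ 2 * sigZ 3) : ℤ) = -1 from rfl] at h
    push_cast at h ⊢
    linarith [h, hsym 0 0, hsym 2 3, hsym 3 2]
  · show N 2 4 = N 1 3 * ((1 : ℤ) : ℝ)
    have h := H 2 4
    rw [show rev 2 = 3 from rfl, show rev 4 = 1 from rfl, show ((sigZ 2 * sigZ 4) : ℤ) = 1 from rfl] at h
    push_cast at h ⊢
    linarith [h, hsym 1 3, hsym 2 4, hsym 3 1, hsym 4 2]
  · show N 2 5 = N 0 3 * ((-1 : ℤ) : ℝ)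
    have h := H 2 5
    rw [show rev 2 = 3 from rfl, show rev 5 = 0 from rfl, show ((sigZ 2 * sigZ 5) : ℤ) = -1 from rfl] at h
    push_cast at h ⊢
    linarith [h, hsym 0 3, hsym 2 5, hsym 3 0, hsym 5 2]
  · show N 3 0 = N 0 3 * ((1 : ℤ) : ℝ)
    have h := H 3 0
    rw [show rev 3 = 2 from rfl, show rev 0 = 5 from rfl, show ((sigZ 3 * sigZ 0) : ℤ) = -1 from rfl] at h
    push_cast at h ⊢
    linarith [h, hsym 0 3, hsym 3 0]
  · show N 3 1 = N 1 3 * ((1 : ℤ) : ℝ)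
    have h := H 3 1
    rw [show rev 3 = 2 from rfl, show rev 1 = 4 from rfl, show ((sigZ 3 * sigZ 1) : ℤ) = 1 from rfl] at h
    push_cast at h ⊢
    linarith [h, hsym 1 3, hsym 3 1]
  · show N 3 2 = N 0 0 * ((0 : ℤ) : ℝ)
    have h := H 3 2
    rw [show rev 3 = 2 from rfl, show rev 2 = 3 from rfl, show ((sigZ 3 * sigZ 2) : ℤ) = -1 from rfl] at h
    push_cast at h ⊢
    linarith [h, hsym 0 0, hsym 2 3, hsym 3 2]
  · show N 3 3 = N 2 2 * ((1 : ℤ) : ℝ)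
    have h := H 3 3
    rw [show rev 3 = 2 from rfl, show ((sigZ 3 * sigZ 3) : ℤ) = 1 from rfl] at h
    push_cast at h ⊢
    linarith [h, hsym 2 2, hsym 3 3]
  · show N 3 4 = N 1 2 * ((-1 : ℤ) : ℝ)
    have h := H 3 4
    rw [show rev 3 = 2 from rfl, show rev 4 = 1 from rfl, show ((sigZ 3 * sigZ 4) : ℤ) = -1 from rfl] at h
    push_cast at h ⊢
    linarith [h, hsym 1 2, hsym 2 1, hsym 3 4, hsym 4 3]
  · show N 3 5 = N 0 2 * ((1 : ℤ) : ℝ)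
    have h := H 3 5
    rw [show rev 3 = 2 from rfl, show rev 5 = 0 from rfl, show ((sigZ 3 * sigZ 5) : ℤ) = 1 from rfl] at h
    push_cast at h ⊢
    linarith [h, hsym 0 2, hsym 2 0, hsym 3 5, hsym 5 3]
  · show N 4 0 = N 0 4 * ((1 : ℤ) : ℝ)
    have h := H 4 0
    rw [show rev 4 = 1 from rfl, show rev 0 = 5 from rfl, show ((sigZ 4 * sigZ 0) : ℤ) = 1 from rfl] at h
    push_cast at h ⊢
    linarith [h, hsym 0 4, hsym 4 0]
  · show N 4 1 = N 0 0 * ((0 : ℤ) : ℝ)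
    have h := H 4 1
    rw [show rev 4 = 1 from rfl, show rev 1 = 4 from rfl, show ((sigZ 4 * sigZ 1) : ℤ) = -1 from rfl] at h
    push_cast at h ⊢
    linarith [h, hsym 0 0, hsym 1 4, hsym 4 1]
  · show N 4 2 = N 1 3 * ((1 : ℤ) : ℝ)
    have h := H 4 2
    rw [show rev 4 = 1 from rfl, show rev 2 = 3 from rfl, show ((sigZ 4 * sigZ 2) : ℤ) = 1 from rfl] at h
    push_cast at h ⊢
    linarith [h, hsym 1 3, hsym 2 4, hsym 3 1, hsym 4 2]
  · show N 4 3 = N 1 2 * ((-1 : ℤ) : ℝ)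
    have h := H 4 3
    rw [show rev 4 = 1 from rfl, show rev 3 = 2 from rfl, show ((sigZ 4 * sigZ 3) : ℤ) = -1 from rfl] at h
    push_cast at h ⊢
    linarith [h, hsym 1 2, hsym 2 1, hsym 3 4, hsym 4 3]
  · show N 4 4 = N 1 1 * ((1 : ℤ) : ℝ)
    have h := H 4 4
    rw [show rev 4 = 1 from rfl, show ((sigZ 4 * sigZ 4) : ℤ) = 1 from rfl] at h
    push_cast at h ⊢
    linarith [h, hsym 1 1, hsym 4 4]
  · show N 4 5 = N 0 1 * ((-1 : ℤ) : ℝ)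
    have h := H 4 5
    rw [show rev 4 = 1 from rfl, show rev 5 = 0 from rfl, show ((sigZ 4 * sigZ 5) : ℤ) = -1 from rfl] at h
    push_cast at h ⊢
    linarith [h, hsym 0 1, hsym 1 0, hsym 4 5, hsym 5 4]
  · show N 5 0 = N 0 0 * ((0 : ℤ) : ℝ)
    have h := H 5 0
    rw [show rev 5 = 0 from rfl, show rev 0 = 5 from rfl, show ((sigZ 5 * sigZ 0) : ℤ) = -1 from rfl] at h
    push_cast at h ⊢
    linarith [h, hsym 0 0, hsym 0 5, hsym 5 0]
  · show N 5 1 = N 0 4 * ((1 : ℤ) : ℝ)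
    have h := H 5 1
    rw [show rev 5 = 0 from rfl, show rev 1 = 4 from rfl, show ((sigZ 5 * sigZ 1) : ℤ) = 1 from rfl] at h
    push_cast at h ⊢
    linarith [h, hsym 0 4, hsym 1 5, hsym 4 0, hsym 5 1]
  · show N 5 2 = N 0 3 * ((-1 : ℤ) : ℝ)
    have h := H 5 2
    rw [show rev 5 = 0 from rfl, show rev 2 = 3 from rfl, show ((sigZ 5 * sigZ 2) : ℤ) = -1 from rfl] at h
    push_cast at h ⊢
    linarith [h, hsym 0 3, hsym 2 5, hsym 3 0, hsym 5 2]
  · show N 5 3 = N 0 2 * ((1 : ℤ) : ℝ)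
    have h := H 5 3
    rw [show rev 5 = 0 from rfl, show rev 3 = 2 from rfl, show ((sigZ 5 * sigZ 3) : ℤ) = 1 from rfl] at h
    push_cast at h ⊢
    linarith [h, hsym 0 2, hsym 2 0, hsym 3 5, hsym 5 3]
  · show N 5 4 = N 0 1 * ((-1 : ℤ) : ℝ)
    have h := H 5 4
    rw [show rev 5 = 0 from rfl, show rev 4 = 1 from rfl, show ((sigZ 5 * sigZ 4) : ℤ) = -1 from rfl] at h
    push_cast at h ⊢
    linarith [h, hsym 0 1, hsym 1 0, hsym 4 5, hsym 5 4]
  · show N 5 5 = N 0 0 * ((1 : ℤ) : ℝ)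
    have h := H 5 5
    rw [show rev 5 = 0 from rfl, show ((sigZ 5 * sigZ 5) : ℤ) = 1 from rfl] at h
    push_cast at h ⊢
    linarith [h, hsym 0 0, hsym 5 5]
lemma key_pm (N : Fin 6 → Fin 6 → ℝ) (hsym : ∀ i j, N j i = N i j)
    (hrel : ∀ i j, N i j = -(sg i * sg j * N (rev i) (rev j))) (i j : Fin 6) :
    N i j = N (s1pm (orbpm i j)) (s2pm (orbpm i j)) * ((cfpm i j : ℤ) : ℝ) := by
  have H : ∀ a b : Fin 6, N a b = ((-(sigZ a * sigZ b) : ℤ) : ℝ) * N (rev a) (rev b) := by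
    intro a b; rw [hrel a b]; push_cast [sg]; ring
  fin_cases i <;> fin_cases j
  · show N 0 0 = N 0 0 * ((1 : ℤ) : ℝ)
    have h := H 0 0
    rw [show rev 0 = 5 from rfl, show (-(sigZ 0 * sigZ 0) : ℤ) = -1 from rfl] at h
    push_cast at h ⊢
    linarith [h, hsym 0 0]
  · show N 0 1 = N 0 1 * ((1 : ℤ) : ℝ)
    have h := H 0 1
    rw [show rev 0 = 5 from rfl, show rev 1 = 4 from rfl, show (-(sigZ 0 * sigZ 1) : ℤ) = 1 from rfl] at h
    push_cast at h ⊢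
    linarith [h, hsym 0 1, hsym 1 0]
  · show N 0 2 = N 0 2 * ((1 : ℤ) : ℝ)
    have h := H 0 2
    rw [show rev 0 = 5 from rfl, show rev 2 = 3 from rfl, show (-(sigZ 0 * sigZ 2) : ℤ) = -1 from rfl] at h
    push_cast at h ⊢
    linarith [h, hsym 0 2, hsym 2 0]
  · show N 0 3 = N 0 3 * ((1 : ℤ) : ℝ)
    have h := H 0 3
    rw [show rev 0 = 5 from rfl, show rev 3 = 2 from rfl, show (-(sigZ 0 * sigZ 3) : ℤ) = 1 from rfl] at h
    push_cast at h ⊢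
    linarith [h, hsym 0 3, hsym 3 0]
  · show N 0 4 = N 0 4 * ((1 : ℤ) : ℝ)
    have h := H 0 4
    rw [show rev 0 = 5 from rfl, show rev 4 = 1 from rfl, show (-(sigZ 0 * sigZ 4) : ℤ) = -1 from rfl] at h
    push_cast at h ⊢
    linarith [h, hsym 0 4, hsym 4 0]
  · show N 0 5 = N 0 5 * ((1 : ℤ) : ℝ)
    have h := H 0 5
    rw [show rev 0 = 5 from rfl, show rev 5 = 0 from rfl, show (-(sigZ 0 * sigZ 5) : ℤ) = 1 from rfl] at h
    push_cast at h ⊢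
    linarith [h, hsym 0 5, hsym 5 0]
  · show N 1 0 = N 0 1 * ((1 : ℤ) : ℝ)
    have h := H 1 0
    rw [show rev 1 = 4 from rfl, show rev 0 = 5 from rfl, show (-(sigZ 1 * sigZ 0) : ℤ) = 1 from rfl] at h
    push_cast at h ⊢
    linarith [h, hsym 0 1, hsym 1 0]
  · show N 1 1 = N 1 1 * ((1 : ℤ) : ℝ)
    have h := H 1 1
    rw [show rev 1 = 4 from rfl, show (-(sigZ 1 * sigZ 1) : ℤ) = -1 from rfl] at h
    push_cast at h ⊢
    linarith [h, hsym 1 1]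
  · show N 1 2 = N 1 2 * ((1 : ℤ) : ℝ)
    have h := H 1 2
    rw [show rev 1 = 4 from rfl, show rev 2 = 3 from rfl, show (-(sigZ 1 * sigZ 2) : ℤ) = 1 from rfl] at h
    push_cast at h ⊢
    linarith [h, hsym 1 2, hsym 2 1]
  · show N 1 3 = N 1 3 * ((1 : ℤ) : ℝ)
    have h := H 1 3
    rw [show rev 1 = 4 from rfl, show rev 3 = 2 from rfl, show (-(sigZ 1 * sigZ 3) : ℤ) = -1 from rfl] at h
    push_cast at h ⊢
    linarith [h, hsym 1 3, hsym 3 1]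
  · show N 1 4 = N 1 4 * ((1 : ℤ) : ℝ)
    have h := H 1 4
    rw [show rev 1 = 4 from rfl, show rev 4 = 1 from rfl, show (-(sigZ 1 * sigZ 4) : ℤ) = 1 from rfl] at h
    push_cast at h ⊢
    linarith [h, hsym 1 4, hsym 4 1]
  · show N 1 5 = N 0 4 * ((-1 : ℤ) : ℝ)
    have h := H 1 5
    rw [show rev 1 = 4 from rfl, show rev 5 = 0 from rfl, show (-(sigZ 1 * sigZ 5) : ℤ) = -1 from rfl] at h
    push_cast at h ⊢
    linarith [h, hsym 0 4, hsym 1 5, hsym 4 0, hsym 5 1]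
  · show N 2 0 = N 0 2 * ((1 : ℤ) : ℝ)
    have h := H 2 0
    rw [show rev 2 = 3 from rfl, show rev 0 = 5 from rfl, show (-(sigZ 2 * sigZ 0) : ℤ) = -1 from rfl] at h
    push_cast at h ⊢
    linarith [h, hsym 0 2, hsym 2 0]
  · show N 2 1 = N 1 2 * ((1 : ℤ) : ℝ)
    have h := H 2 1
    rw [show rev 2 = 3 from rfl, show rev 1 = 4 from rfl, show (-(sigZ 2 * sigZ 1) : ℤ) = 1 from rfl] at h
    push_cast at h ⊢
    linarith [h, hsym 1 2, hsym 2 1]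
  · show N 2 2 = N 2 2 * ((1 : ℤ) : ℝ)
    have h := H 2 2
    rw [show rev 2 = 3 from rfl, show (-(sigZ 2 * sigZ 2) : ℤ) = -1 from rfl] at h
    push_cast at h ⊢
    linarith [h, hsym 2 2]
  · show N 2 3 = N 2 3 * ((1 : ℤ) : ℝ)
    have h := H 2 3
    rw [show rev 2 = 3 from rfl, show rev 3 = 2 from rfl, show (-(sigZ 2 * sigZ 3) : ℤ) = 1 from rfl] at h
    push_cast at h ⊢
    linarith [h, hsym 2 3, hsym 3 2]
  · show N 2 4 = N 1 3 * ((-1 : ℤ) : ℝ)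
    have h := H 2 4
    rw [show rev 2 = 3 from rfl, show rev 4 = 1 from rfl, show (-(sigZ 2 * sigZ 4) : ℤ) = -1 from rfl] at h
    push_cast at h ⊢
    linarith [h, hsym 1 3, hsym 2 4, hsym 3 1, hsym 4 2]
  · show N 2 5 = N 0 3 * ((1 : ℤ) : ℝ)
    have h := H 2 5
    rw [show rev 2 = 3 from rfl, show rev 5 = 0 from rfl, show (-(sigZ 2 * sigZ 5) : ℤ) = 1 from rfl] at h
    push_cast at h ⊢
    linarith [h, hsym 0 3, hsym 2 5, hsym 3 0, hsym 5 2]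
  · show N 3 0 = N 0 3 * ((1 : ℤ) : ℝ)
    have h := H 3 0
    rw [show rev 3 = 2 from rfl, show rev 0 = 5 from rfl, show (-(sigZ 3 * sigZ 0) : ℤ) = 1 from rfl] at h
    push_cast at h ⊢
    linarith [h, hsym 0 3, hsym 3 0]
  · show N 3 1 = N 1 3 * ((1 : ℤ) : ℝ)
    have h := H 3 1
    rw [show rev 3 = 2 from rfl, show rev 1 = 4 from rfl, show (-(sigZ 3 * sigZ 1) : ℤ) = -1 from rfl] at h
    push_cast at h ⊢
    linarith [h, hsym 1 3, hsym 3 1]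
  · show N 3 2 = N 2 3 * ((1 : ℤ) : ℝ)
    have h := H 3 2
    rw [show rev 3 = 2 from rfl, show rev 2 = 3 from rfl, show (-(sigZ 3 * sigZ 2) : ℤ) = 1 from rfl] at h
    push_cast at h ⊢
    linarith [h, hsym 2 3, hsym 3 2]
  · show N 3 3 = N 2 2 * ((-1 : ℤ) : ℝ)
    have h := H 3 3
    rw [show rev 3 = 2 from rfl, show (-(sigZ 3 * sigZ 3) : ℤ) = -1 from rfl] at h
    push_cast at h ⊢
    linarith [h, hsym 2 2, hsym 3 3]
  · show N 3 4 = N 1 2 * ((1 : ℤ) : ℝ)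
    have h := H 3 4
    rw [show rev 3 = 2 from rfl, show rev 4 = 1 from rfl, show (-(sigZ 3 * sigZ 4) : ℤ) = 1 from rfl] at h
    push_cast at h ⊢
    linarith [h, hsym 1 2, hsym 2 1, hsym 3 4, hsym 4 3]
  · show N 3 5 = N 0 2 * ((-1 : ℤ) : ℝ)
    have h := H 3 5
    rw [show rev 3 = 2 from rfl, show rev 5 = 0 from rfl, show (-(sigZ 3 * sigZ 5) : ℤ) = -1 from rfl] at h
    push_cast at h ⊢
    linarith [h, hsym 0 2, hsym 2 0, hsym 3 5, hsym 5 3]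
  · show N 4 0 = N 0 4 * ((1 : ℤ) : ℝ)
    have h := H 4 0
    rw [show rev 4 = 1 from rfl, show rev 0 = 5 from rfl, show (-(sigZ 4 * sigZ 0) : ℤ) = -1 from rfl] at h
    push_cast at h ⊢
    linarith [h, hsym 0 4, hsym 4 0]
  · show N 4 1 = N 1 4 * ((1 : ℤ) : ℝ)
    have h := H 4 1
    rw [show rev 4 = 1 from rfl, show rev 1 = 4 from rfl, show (-(sigZ 4 * sigZ 1) : ℤ) = 1 from rfl] at h
    push_cast at h ⊢
    linarith [h, hsym 1 4, hsym 4 1]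
  · show N 4 2 = N 1 3 * ((-1 : ℤ) : ℝ)
    have h := H 4 2
    rw [show rev 4 = 1 from rfl, show rev 2 = 3 from rfl, show (-(sigZ 4 * sigZ 2) : ℤ) = -1 from rfl] at h
    push_cast at h ⊢
    linarith [h, hsym 1 3, hsym 2 4, hsym 3 1, hsym 4 2]
  · show N 4 3 = N 1 2 * ((1 : ℤ) : ℝ)
    have h := H 4 3
    rw [show rev 4 = 1 from rfl, show rev 3 = 2 from rfl, show (-(sigZ 4 * sigZ 3) : ℤ) = 1 from rfl] at h
    push_cast at h ⊢
    linarith [h, hsym 1 2, hsym 2 1, hsym 3 4, hsym 4 3]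
  · show N 4 4 = N 1 1 * ((-1 : ℤ) : ℝ)
    have h := H 4 4
    rw [show rev 4 = 1 from rfl, show (-(sigZ 4 * sigZ 4) : ℤ) = -1 from rfl] at h
    push_cast at h ⊢
    linarith [h, hsym 1 1, hsym 4 4]
  · show N 4 5 = N 0 1 * ((1 : ℤ) : ℝ)
    have h := H 4 5
    rw [show rev 4 = 1 from rfl, show rev 5 = 0 from rfl, show (-(sigZ 4 * sigZ 5) : ℤ) = 1 from rfl] at h
    push_cast at h ⊢
    linarith [h, hsym 0 1, hsym 1 0, hsym 4 5, hsym 5 4]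
  · show N 5 0 = N 0 5 * ((1 : ℤ) : ℝ)
    have h := H 5 0
    rw [show rev 5 = 0 from rfl, show rev 0 = 5 from rfl, show (-(sigZ 5 * sigZ 0) : ℤ) = 1 from rfl] at h
    push_cast at h ⊢
    linarith [h, hsym 0 5, hsym 5 0]
  · show N 5 1 = N 0 4 * ((-1 : ℤ) : ℝ)
    have h := H 5 1
    rw [show rev 5 = 0 from rfl, show rev 1 = 4 from rfl, show (-(sigZ 5 * sigZ 1) : ℤ) = -1 from rfl] at h
    push_cast at h ⊢
    linarith [h, hsym 0 4, hsym 1 5, hsym 4 0, hsym 5 1]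
  · show N 5 2 = N 0 3 * ((1 : ℤ) : ℝ)
    have h := H 5 2
    rw [show rev 5 = 0 from rfl, show rev 2 = 3 from rfl, show (-(sigZ 5 * sigZ 2) : ℤ) = 1 from rfl] at h
    push_cast at h ⊢
    linarith [h, hsym 0 3, hsym 2 5, hsym 3 0, hsym 5 2]
  · show N 5 3 = N 0 2 * ((-1 : ℤ) : ℝ)
    have h := H 5 3
    rw [show rev 5 = 0 from rfl, show rev 3 = 2 from rfl, show (-(sigZ 5 * sigZ 3) : ℤ) = -1 from rfl] at h
    push_cast at h ⊢
    linarith [h, hsym 0 2, hsym 2 0, hsym 3 5, hsym 5 3]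
  · show N 5 4 = N 0 1 * ((1 : ℤ) : ℝ)
    have h := H 5 4
    rw [show rev 5 = 0 from rfl, show rev 4 = 1 from rfl, show (-(sigZ 5 * sigZ 4) : ℤ) = 1 from rfl] at h
    push_cast at h ⊢
    linarith [h, hsym 0 1, hsym 1 0, hsym 4 5, hsym 5 4]
  · show N 5 5 = N 0 0 * ((-1 : ℤ) : ℝ)
    have h := H 5 5
    rw [show rev 5 = 0 from rfl, show (-(sigZ 5 * sigZ 5) : ℤ) = -1 from rfl] at h
    push_cast at h ⊢
    linarith [h, hsym 0 0, hsym 5 5]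

lemma Tgen_mem (M : Fin 6 → Fin 6 → ℝ) : Tgen M ∈ Rspace :=
  fun κ lam μ ν => ⟨Tgen_a1 M κ lam μ ν, Tgen_a2 M κ lam μ ν⟩

lemma Tgen_neg (M : Fin 6 → Fin 6 → ℝ) (k l m n : Fin 4) :
    Tgen (fun i j => -(M i j)) k l m n = -(Tgen M k l m n) := by
  simp only [Tgen]; ring

lemma dd_Tgen (M : Fin 6 → Fin 6 → ℝ) (κ lam μ ν : Fin 4) :
    dd (Tgen M) κ lam μ ν = Tgen (fun i j => sg i * sg j * M (rev i) (rev j)) κ lam μ ν := by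
  have h1 : ∀ a b c d, Tgen M a b c d = - Tgen M b a c d := Tgen_a1 M
  have h2 : ∀ a b c d, Tgen M a b c d = - Tgen M a b d c := Tgen_a2 M
  have hd1 : ∀ a b c d, dd (Tgen M) a b c d = - dd (Tgen M) b a c d :=
    fun a b c d => dd_swap1 (Tgen M) b a c d
  have hd2 : ∀ a b c d, dd (Tgen M) a b c d = - dd (Tgen M) a b d c :=
    fun a b c d => dd_swap2 (Tgen M) a b d c
  have hM : Mcomp (dd (Tgen M)) = fun i j => sg i * sg j * M (rev i) (rev j) := by
    funext i j
    show dd (Tgen M) (pa i) (pb i) (pa j) (pb j) = _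
    rw [dd_eval (Tgen M) h1 h2 i j, Mcomp_Tgen]
  rw [recon (dd (Tgen M)) hd1 hd2 κ lam μ ν, hM]

lemma MofPP_add (a b : Fin 9 → ℝ) (i j : Fin 6) :
    MofPP (a + b) i j = MofPP a i j + MofPP b i j := by
  simp only [MofPP, Pi.add_apply, add_mul, Finset.sum_add_distrib]
lemma MofPP_smul (r : ℝ) (a : Fin 9 → ℝ) (i j : Fin 6) :
    MofPP (r • a) i j = r * MofPP a i j := by
  simp only [MofPP, Pi.smul_apply, smul_eq_mul, Finset.mul_sum]
  exact Finset.sum_congr rfl fun k _ => by ring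
lemma MofPM_add (a b : Fin 12 → ℝ) (i j : Fin 6) :
    MofPM (a + b) i j = MofPM a i j + MofPM b i j := by
  simp only [MofPM, Pi.add_apply, add_mul, Finset.sum_add_distrib]
lemma MofPM_smul (r : ℝ) (a : Fin 12 → ℝ) (i j : Fin 6) :
    MofPM (r • a) i j = r * MofPM a i j := by
  simp only [MofPM, Pi.smul_apply, smul_eq_mul, Finset.mul_sum]
  exact Finset.sum_congr rfl fun k _ => by ring

/-- parametrization of `Rspace` -/
def phiRs : (Fin 6 × Fin 6 → ℝ) →ₗ[ℝ] (Fin 4 → Fin 4 → Fin 4 → Fin 4 → ℝ) where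
  toFun c := Tgen (fun i j => c (i, j))
  map_add' a b := by funext k l m n; simp only [Tgen, Pi.add_apply]; ring
  map_smul' r a := by
    funext k l m n
    simp only [Tgen, Pi.smul_apply, smul_eq_mul, RingHom.id_apply]
    ring

/-- parametrization of `Rpp` -/
def phiPP : (Fin 9 → ℝ) →ₗ[ℝ] (Fin 4 → Fin 4 → Fin 4 → Fin 4 → ℝ) where
  toFun c := Tgen (MofPP c)
  map_add' a b := by funext k l m n; simp only [Tgen, MofPP_add, Pi.add_apply]; ring
  map_smul' r a := by
    funext k l m n
    simp only [Tgen, MofPP_smul, Pi.smul_apply, smul_eq_mul, RingHom.id_apply]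
    ring

/-- parametrization of `Rpm` -/
def phiPM : (Fin 12 → ℝ) →ₗ[ℝ] (Fin 4 → Fin 4 → Fin 4 → Fin 4 → ℝ) where
  toFun c := Tgen (MofPM c)
  map_add' a b := by funext k l m n; simp only [Tgen, MofPM_add, Pi.add_apply]; ring
  map_smul' r a := by
    funext k l m n
    simp only [Tgen, MofPM_smul, Pi.smul_apply, smul_eq_mul, RingHom.id_apply]
    ring

lemma phiPP_mem (c : Fin 9 → ℝ) : phiPP c ∈ Rpp := by
  refine ⟨fun κ lam μ ν => ⟨Tgen_a1 _ κ lam μ ν, Tgen_a2 _ κ lam μ ν⟩,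
    fun κ lam μ ν => ?_, fun κ lam μ ν => ?_⟩
  · show Tgen (MofPP c) μ ν κ lam = Tgen (MofPP c) κ lam μ ν
    simp only [Tgen]
    rw [MofPP_symm c (pidx κ lam) (pidx μ ν)]
    ring
  · show dd (Tgen (MofPP c)) κ lam μ ν = Tgen (MofPP c) κ lam μ ν
    rw [dd_Tgen]
    have h : (fun i j => sg i * sg j * MofPP c (rev i) (rev j)) = MofPP c := by
      funext i j; rw [← MofPP_rel]
    rw [h]

lemma phiPM_mem (c : Fin 12 → ℝ) : phiPM c ∈ Rpm := by
  refine ⟨fun κ lam μ ν => ⟨Tgen_a1 _ κ lam μ ν, Tgen_a2 _ κ lam μ ν⟩,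
    fun κ lam μ ν => ?_, fun κ lam μ ν => ?_⟩
  · show Tgen (MofPM c) μ ν κ lam = Tgen (MofPM c) κ lam μ ν
    simp only [Tgen]
    rw [MofPM_symm c (pidx κ lam) (pidx μ ν)]
    ring
  · show dd (Tgen (MofPM c)) κ lam μ ν = - Tgen (MofPM c) κ lam μ ν
    rw [dd_Tgen]
    have h : (fun i j => sg i * sg j * MofPM c (rev i) (rev j))
        = fun i j => -(MofPM c i j) := by
      funext i j; have := MofPM_rel c i j; linarith
    rw [h, Tgen_neg]

/-- Rainich: in the 36-dimensional space `𝓡` of rank-4 tensors with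
`R_{κλμν} = −R_{λκμν} = −R_{κλνμ}`, the subspace `𝓡₊₊` has dimension 9 and the subspace
`𝓡₊₋` has dimension 12. -/
theorem rainich_dimensions :
    Module.finrank ℝ Rspace = 36 ∧
    Module.finrank ℝ Rpp = 9 ∧
    Module.finrank ℝ Rpm = 12 := by
  refine ⟨?_, ?_, ?_⟩
  · -- Rspace has dimension 36
    have hmem : ∀ c : Fin 6 × Fin 6 → ℝ, phiRs c ∈ Rspace := fun c =>
      show Tgen (fun i j => c (i, j)) ∈ Rspace from Tgen_mem _
    have hinj : Function.Injective (phiRs.codRestrict Rspace hmem) := by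
      intro a b hab
      have h : Tgen (fun i j => a (i, j)) = Tgen (fun i j => b (i, j)) :=
        congrArg Subtype.val hab
      funext p
      have h2 : Mcomp (Tgen (fun i j => a (i, j))) p.1 p.2
          = Mcomp (Tgen (fun i j => b (i, j))) p.1 p.2 := by rw [h]
      rwa [Mcomp_Tgen, Mcomp_Tgen] at h2
    have hsurj : Function.Surjective (phiRs.codRestrict Rspace hmem) := by
      rintro ⟨R, hR⟩
      have h1 : ∀ κ lam μ ν, R κ lam μ ν = - R lam κ μ ν := fun κ lam μ ν => (hR κ lam μ ν).1
      have h2 : ∀ κ lam μ ν, R κ lam μ ν = - R κ lam ν μ := fun κ lam μ ν => (hR κ lam μ ν).2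
      refine ⟨fun p => Mcomp R p.1 p.2, Subtype.ext ?_⟩
      show Tgen (fun i j => Mcomp R i j) = R
      funext κ lam μ ν
      exact (recon R h1 h2 κ lam μ ν).symm
    have e := LinearEquiv.ofBijective (phiRs.codRestrict Rspace hmem) ⟨hinj, hsurj⟩
    rw [← LinearEquiv.finrank_eq e]
    simp [Module.finrank_pi]
  · -- Rpp has dimension 9
    have hinj : Function.Injective (phiPP.codRestrict Rpp phiPP_mem) := by
      intro a b hab
      have h : Tgen (MofPP a) = Tgen (MofPP b) := congrArg Subtype.val hab
      funext k
      have h2 : Mcomp (Tgen (MofPP a)) (r1pp k) (r2pp k)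
          = Mcomp (Tgen (MofPP b)) (r1pp k) (r2pp k) := by rw [h]
      rw [Mcomp_Tgen, Mcomp_Tgen, MofPP_eval, MofPP_eval, (Lpp2 k).1, (Lpp2 k).2] at h2
      simpa using h2
    have hsurj : Function.Surjective (phiPP.codRestrict Rpp phiPP_mem) := by
      rintro ⟨R, ha, htr, hdd⟩
      have h1 : ∀ κ lam μ ν, R κ lam μ ν = - R lam κ μ ν := fun κ lam μ ν => (ha κ lam μ ν).1
      have h2 : ∀ κ lam μ ν, R κ lam μ ν = - R κ lam ν μ := fun κ lam μ ν => (ha κ lam μ ν).2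
      have hsym : ∀ i j, Mcomp R j i = Mcomp R i j :=
        fun i j => htr (pa i) (pb i) (pa j) (pb j)
      have hrel : ∀ i j, Mcomp R i j = sg i * sg j * Mcomp R (rev i) (rev j) := by
        intro i j
        rw [← dd_eval R h1 h2 i j]
        exact (hdd (pa i) (pb i) (pa j) (pb j)).symm
      refine ⟨fun k => Mcomp R (r1pp k) (r2pp k), Subtype.ext ?_⟩
      show Tgen (MofPP fun k => Mcomp R (r1pp k) (r2pp k)) = R
      have hM : MofPP (fun k => Mcomp R (r1pp k) (r2pp k)) = Mcomp R := by
        funext i j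
        rw [MofPP_eval]
        exact (key_pp (Mcomp R) hsym hrel i j).symm
      rw [hM]
      funext κ lam μ ν
      exact (recon R h1 h2 κ lam μ ν).symm
    have e := LinearEquiv.ofBijective (phiPP.codRestrict Rpp phiPP_mem) ⟨hinj, hsurj⟩
    rw [← LinearEquiv.finrank_eq e]
    simp [Module.finrank_pi]
  · -- Rpm has dimension 12
    have hinj : Function.Injective (phiPM.codRestrict Rpm phiPM_mem) := by
      intro a b hab
      have h : Tgen (MofPM a) = Tgen (MofPM b) := congrArg Subtype.val hab
      funext k
      have h2 : Mcomp (Tgen (MofPM a)) (s1pm k) (s2pm k)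
          = Mcomp (Tgen (MofPM b)) (s1pm k) (s2pm k) := by rw [h]
      rw [Mcomp_Tgen, Mcomp_Tgen, MofPM_eval, MofPM_eval, (Lpm2 k).1, (Lpm2 k).2] at h2
      simpa using h2
    have hsurj : Function.Surjective (phiPM.codRestrict Rpm phiPM_mem) := by
      rintro ⟨R, ha, htr, hdd⟩
      have h1 : ∀ κ lam μ ν, R κ lam μ ν = - R lam κ μ ν := fun κ lam μ ν => (ha κ lam μ ν).1
      have h2 : ∀ κ lam μ ν, R κ lam μ ν = - R κ lam ν μ := fun κ lam μ ν => (ha κ lam μ ν).2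
      have hsym : ∀ i j, Mcomp R j i = Mcomp R i j :=
        fun i j => htr (pa i) (pb i) (pa j) (pb j)
      have hrel : ∀ i j, Mcomp R i j = -(sg i * sg j * Mcomp R (rev i) (rev j)) := by
        intro i j
        have hd := dd_eval R h1 h2 i j
        have hm := hdd (pa i) (pb i) (pa j) (pb j)
        show R (pa i) (pb i) (pa j) (pb j) = -(sg i * sg j * Mcomp R (rev i) (rev j))
        rw [← hd]
        linarith
      refine ⟨fun k => Mcomp R (s1pm k) (s2pm k), Subtype.ext ?_⟩
      show Tgen (MofPM fun k => Mcomp R (s1pm k) (s2pm k)) = R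
      have hM : MofPM (fun k => Mcomp R (s1pm k) (s2pm k)) = Mcomp R := by
        funext i j
        rw [MofPM_eval]
        exact (key_pm (Mcomp R) hsym hrel i j).symm
      rw [hM]
      funext κ lam μ ν
      exact (recon R h1 h2 κ lam μ ν).symm
    have e := LinearEquiv.ofBijective (phiPM.codRestrict Rpm phiPM_mem) ⟨hinj, hsurj⟩
    rw [← LinearEquiv.finrank_eq e]
    simp [Module.finrank_pi]
end
end
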